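/- arXiv:1709.02034 — 10 statements merged into one kernel-verified Lean document; each statement's English description precedes it below -/
import Mathlib

section
/- If a string x of length n has periods of orders i and j with i + j ≤ n, then x has a period of order gcd(i, j). Here x has a period of order p (1 ≤ p ≤ n) if x[i+p] = x[i] for all valid indices i, i.e., x(t+p) = x(t) for all t with t + p < n. -/
/-!
Euclid's algorithm on periods: if `q ≤ p` are periods of a string of length at least `p + q`,
then so is `p - q`. Iterating this replaces `(p, q)` by pairs with the same gcd and
smaller sum, which stays below the length, until one period is `0` and the other is
`gcd p q`.
-/

/-- The string of length `n` is the restriction of `x` to `[0, n)`. -/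
def HasPeriod {α : Type*} (x : ℕ → α) (n p : ℕ) : Prop :=
  ∀ t, t + p < n → x (t + p) = x t

namespace HasPeriod

variable {α : Type*} {x : ℕ → α} {n : ℕ}

theorem sub {p q : ℕ} (hp : HasPeriod x n p) (hq : HasPeriod x n q) (hqp : q ≤ p) (hpq : p + q ≤ n) :
    HasPeriod x n (p - q) := by
  intro t ht
  by_cases htp : t + p < n
  · -- step forward by `p`, then back by `q`
    have hback : x (t + (p - q) + q) = x (t + (p - q)) := hq _ (by omega)
    rw [show t + (p - q) + q = t + p by omega, hp t htp] at hback
    exact hback.symm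
  · -- near the right end `t ≥ q`, so step back by `q`, then forward by `p`
    have hfwd : x (t - q + p) = x (t - q) := hp _ (by omega)
    have hback : x (t - q + q) = x (t - q) := hq _ (by omega)
    rw [show t - q + p = t + (p - q) by omega] at hfwd
    rw [show t - q + q = t by omega] at hback
    rw [hfwd, hback]

theorem gcd {p q : ℕ} (hp : HasPeriod x n p) (hq : HasPeriod x n q) (hpq : p + q ≤ n) :
    HasPeriod x n (p.gcd q) := by
  rcases Nat.eq_zero_or_pos p with rfl | hp0
  · simpa using hq
  rcases Nat.eq_zero_or_pos q with rfl | hq0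
  · simpa using hp
  rcases le_total q p with hqp | hpq'
  · rw [← Nat.gcd_sub_self_left hqp]
    exact (hp.sub hq hqp hpq).gcd hq (by omega)
  · rw [← Nat.gcd_sub_self_right hpq']
    exact hp.gcd (hq.sub hp hpq' (by omega)) (by omega)
termination_by p + q

end HasPeriod

theorem fine_wilf_general (n i j : ℕ) (x : ℕ → Bool)
    (hij : i + j ≤ n)
    (hpi : ∀ t, t + i < n → x (t + i) = x t)
    (hpj : ∀ t, t + j < n → x (t + j) = x t) :
    ∀ t, t + Nat.gcd i j < n → x (t + Nat.gcd i j) = x t :=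
  HasPeriod.gcd hpi hpj hij

/-- Fine–Wilf / Lyndon–Schützenberger periodicity lemma: if a string `x` of
length `n` has periods of orders `i` and `j` with `i + j ≤ n`, then it has a
period of order `gcd i j`. -/
theorem fine_wilf (n i j : ℕ) (x : ℕ → Bool)
    (hi : 1 ≤ i) (hj : 1 ≤ j) (hij : i + j ≤ n)
    (hpi : ∀ t, t + i < n → x (t + i) = x t)
    (hpj : ∀ t, t + j < n → x (t + j) = x t) :
    ∀ t, t + Nat.gcd i j < n → x (t + Nat.gcd i j) = x t :=
  fine_wilf_general n i j x hij hpi hpj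
end

section
/- Every maxterm of the string-matching function SM_{n,k} has width at least 2·√(n-k+1). That is, if ρ is a partial assignment fixing n₁ text variables and k₁ pattern variables that forces SM(x,y) = 0 regardless of the unfixed variables, then n₁ + k₁ ≥ 2·√(n-k+1). -/
/-!
If a partial assignment forces every total input to avoid an occurrence of the pattern, then at
each of the `n - k + 1` shifts `i` some pattern position `j` must be fixed together with the text
position `i + j`: otherwise the free variables could be set so that the pattern occurs at `i`.
Hence every shift is a difference of a fixed text position and a fixed pattern position, so
`n - k + 1 ≤ n₁ k₁`, and AM–GM gives `n₁ + k₁ ≥ 2 √(n₁ k₁) ≥ 2 √(n - k + 1)`.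
-/

/-- `y` occurs as a contiguous substring of `x`. -/
def occursIn {n k : ℕ} (x : Fin n → Bool) (y : Fin k → Bool) : Prop :=
  ∃ i, ∃ _ : i + k ≤ n, ∀ t : Fin k, x ⟨i + t.val, by have := t.isLt; omega⟩ = y t

open Finset Pointwise

namespace PartialAssignment

variable {ι α : Type*}

def support [Fintype ι] (ρ : ι → Option α) : Finset ι :=
  univ.filter fun i => (ρ i).isSome = true

def IsExtension (ρ : ι → Option α) (x : ι → α) : Prop :=
  ∀ i b, ρ i = some b → x i = b

def extend (ρ : ι → Option α) (f : ι → α) : ι → α :=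
  fun i => (ρ i).getD (f i)

theorem isExtension_extend (ρ : ι → Option α) (f : ι → α) : IsExtension ρ (extend ρ f) := by
  intro i b h
  simp [extend, h]

theorem extend_of_eq_none {ρ : ι → Option α} (f : ι → α) {i : ι} (h : ρ i = none) :
    extend ρ f i = f i := by
  simp [extend, h]

end PartialAssignment

open PartialAssignment

theorem exists_fixed_pair_of_forall_not_occursIn {n k : ℕ}
    {ρx : Fin n → Option Bool} {ρy : Fin k → Option Bool}
    (hforce : ∀ x y, IsExtension ρx x → IsExtension ρy y → ¬ occursIn x y)
    {i : ℕ} (hi : i + k ≤ n) :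
    ∃ j ∈ support ρy, ∃ t ∈ support ρx, (t : ℕ) = i + j := by
  by_contra! hfree
  simp only [support, mem_filter, mem_univ, true_and, Option.isSome_iff_ne_none] at hfree
  have hfree' (j : Fin k) (hj : i + j < n) : ρy j = none ∨ ρx ⟨i + j, hj⟩ = none := by
    by_contra! h
    exact hfree j h.1 _ h.2 rfl
  -- The pattern copies the fixed text bits of the window at `i`; the text then copies the pattern.
  set y := extend ρy fun j => (ρx ⟨i + j, by omega⟩).getD false
  set x := extend ρx fun t => if h : i ≤ t ∧ t < i + k then y ⟨t - i, by omega⟩ else false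
  refine hforce x y (isExtension_extend _ _) (isExtension_extend _ _) ⟨i, hi, fun j => ?_⟩
  have hj : i + j < n := by omega
  rcases hfree' j hj with hy | hx
  · cases hx : ρx ⟨i + j, hj⟩ with
    | none => simp [x, extend_of_eq_none _ hx]
    | some b => simp [x, y, extend, hx, hy]
  · simp [x, extend_of_eq_none _ hx]

theorem range_subset_support_sub_support {n k : ℕ}
    {ρx : Fin n → Option Bool} {ρy : Fin k → Option Bool}
    (hforce : ∀ x y, IsExtension ρx x → IsExtension ρy y → ¬ occursIn x y) :
    range (n + 1 - k) ⊆ (support ρx).image Fin.val - (support ρy).image Fin.val := by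
  intro i hi
  obtain ⟨j, hj, t, ht, hti⟩ :=
    exists_fixed_pair_of_forall_not_occursIn hforce (i := i) (by have := mem_range.1 hi; omega)
  exact mem_sub.2 ⟨t, mem_image_of_mem _ ht, j, mem_image_of_mem _ hj, by omega⟩

theorem two_mul_sqrt_le_add_of_le_mul {a b c : ℝ} (ha : 0 ≤ a) (hb : 0 ≤ b) (h : c ≤ a * b) :
    2 * √c ≤ a + b := by
  have hc : √c ≤ √a * √b := Real.sqrt_mul ha b ▸ Real.sqrt_le_sqrt h
  nlinarith [sq_nonneg (√a - √b), Real.sq_sqrt ha, Real.sq_sqrt hb]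

theorem maxterm_width_general (n k : ℕ)
    (ρx : Fin n → Option Bool) (ρy : Fin k → Option Bool)
    (hforce : ∀ (x : Fin n → Bool) (y : Fin k → Bool),
      (∀ i b, ρx i = some b → x i = b) →
      (∀ j b, ρy j = some b → y j = b) →
      ¬ occursIn x y) :
    2 * Real.sqrt ((n : ℝ) - k + 1) ≤
      (((Finset.univ.filter fun i => (ρx i).isSome = true).card : ℝ) +
        ((Finset.univ.filter fun j => (ρy j).isSome = true).card : ℝ)) := by
  have hshifts : n + 1 - k ≤ #(support ρx) * #(support ρy) :=
    calc n + 1 - k = #(range (n + 1 - k)) := (card_range _).symm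
      _ ≤ #((support ρx).image Fin.val - (support ρy).image Fin.val) :=
        card_le_card (range_subset_support_sub_support hforce)
      _ ≤ #((support ρx).image Fin.val) * #((support ρy).image Fin.val) := card_sub_le
      _ ≤ #(support ρx) * #(support ρy) := Nat.mul_le_mul card_image_le card_image_le
  refine two_mul_sqrt_le_add_of_le_mul (Nat.cast_nonneg _) (Nat.cast_nonneg _) ?_
  have hcast : ((n + 1 : ℕ) : ℝ) ≤ ((n + 1 - k : ℕ) : ℝ) + k := by
    exact_mod_cast le_tsub_add
  push_cast at hcast
  calc (n : ℝ) - k + 1 ≤ ((n + 1 - k : ℕ) : ℝ) := by linarith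
    _ ≤ _ := by exact_mod_cast hshifts

/-- Every maxterm of `SM_{n,k}` has width at least `2·√(n-k+1)`: if a partial
assignment (`ρx` on text variables, `ρy` on pattern variables) forces
`SM(x,y) = 0` on every consistent total input, then the number of fixed
variables is at least `2·√(n-k+1)`. -/
theorem maxterm_width (n k : ℕ) (hk : 1 ≤ k) (hkn : k ≤ n)
    (ρx : Fin n → Option Bool) (ρy : Fin k → Option Bool)
    (hforce : ∀ (x : Fin n → Bool) (y : Fin k → Bool),
      (∀ i b, ρx i = some b → x i = b) →
      (∀ j b, ρy j = some b → y j = b) →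
      ¬ occursIn x y) :
    2 * Real.sqrt ((n : ℝ) - k + 1) ≤
      (((Finset.univ.filter fun i => (ρx i).isSome = true).card : ℝ) +
        ((Finset.univ.filter fun j => (ρy j).isSome = true).card : ℝ)) :=
  maxterm_width_general n k ρx ρy hforce
end

section
/- If ρ is a partial assignment fixing n₁ text variables and k₁ pattern variables that forces SM_{n,k}(x,y) = 0, and k ≤ √(n-k+1), then n₁ + k₁ ≥ k + (n-k+1)/k. -/
/-!
A partial assignment forcing `y` not to occur in `x` must, for every window position `i`, fix
some pattern bit `y t` together with the text bit `x (i + t)`: otherwise the free bits can be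
filled so that `y` occurs at `i`. The map from fixed pairs `(i + t, t)` to windows `i` is onto,
so `n - k + 1 ≤ n₁ k₁`. Hence `n₁ + k₁ ≥ (n - k + 1) / k₁ + k₁`, and since `N / a + a`
decreases on `(0, √N]` and `k₁ ≤ k ≤ √(n - k + 1)`, this is at least `(n - k + 1) / k + k`.
-/

open Finset

theorem div_add_self_le_div_add_self {N a b : ℝ} (ha : 0 < a) (hab : a ≤ b) (hb : b * b ≤ N) :
    N / b + b ≤ N / a + a := by
  have hb0 : 0 < b := ha.trans_le hab
  have hab' : a * b ≤ N := (mul_le_mul_of_nonneg_right hab hb0.le).trans hb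
  rw [div_add' _ _ _ hb0.ne', div_add' _ _ _ ha.ne', div_le_div_iff₀ hb0 ha]
  nlinarith [mul_nonneg (sub_nonneg.2 hab) (sub_nonneg.2 hab')]

theorem le_card_mul_card_of_forall_exists_add_eq {m : ℕ} {A B : Finset ℕ}
    (h : ∀ i < m, ∃ a ∈ A, ∃ b ∈ B, a = i + b) : m ≤ #A * #B :=
  calc m = #(range m) := (card_range m).symm
    _ ≤ #((A ×ˢ B).image fun p => p.1 - p.2) := card_le_card fun i hi => by
        obtain ⟨a, ha, b, hb, rfl⟩ := h i (mem_range.1 hi)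
        exact mem_image.2 ⟨(i + b, b), mem_product.2 ⟨ha, hb⟩, by simp⟩
    _ ≤ #(A ×ˢ B) := card_image_le
    _ = #A * #B := card_product A B

def fixedVars {ι α : Type*} [Fintype ι] (ρ : ι → Option α) : Finset ι :=
  univ.filter fun i => (ρ i).isSome = true

section Forcing

variable {n k : ℕ} (ρx : Fin n → Option Bool) (ρy : Fin k → Option Bool)

def ForcesNotOccursIn : Prop :=
  ∀ (x : Fin n → Bool) (y : Fin k → Bool),
    (∀ i b, ρx i = some b → x i = b) → (∀ j b, ρy j = some b → y j = b) →
    ¬ occursIn x y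

theorem exists_fixed_pair_of_forces_not_occursIn
    (hforce : ForcesNotOccursIn ρx ρy) (i : ℕ) (hi : i + k ≤ n) :
    ∃ t : Fin k, (ρy t).isSome ∧ (ρx ⟨i + t, by omega⟩).isSome := by
  by_contra! hfree
  let y : Fin k → Bool := fun t => (ρy t).getD ((ρx ⟨i + t, by omega⟩).getD false)
  let x : Fin n → Bool := fun p =>
    (ρx p).getD (if h : i ≤ p ∧ p < i + k then y ⟨p - i, by omega⟩ else false)
  refine hforce x y (fun p b h => by simp [x, h]) (fun j b h => by simp [y, h])
    ⟨i, hi, fun t => ?_⟩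
  cases hρx : ρx ⟨i + t, by omega⟩ with
  | some b =>
    have hρy : ρy t = none :=
      Option.not_isSome_iff_eq_none.1 fun h => by simpa [hρx] using hfree t h
    simp [x, y, hρx, hρy]
  | none =>
    have hwin : i ≤ i + t.val ∧ i + t.val < i + k := by omega
    simp [x, hρx, hwin]

theorem add_one_sub_le_card_fixedVars_mul_card_fixedVars
    (hforce : ForcesNotOccursIn ρx ρy) :
    n + 1 - k ≤ #(fixedVars ρx) * #(fixedVars ρy) := by
  simpa only [card_map] using le_card_mul_card_of_forall_exists_add_eq
    (A := (fixedVars ρx).map Fin.valEmbedding) (B := (fixedVars ρy).map Fin.valEmbedding)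
    fun i hi => by
      obtain ⟨t, hty, htx⟩ :=
        exists_fixed_pair_of_forces_not_occursIn ρx ρy hforce i (by omega)
      exact ⟨_, mem_map_of_mem _ (mem_filter.2 ⟨mem_univ _, htx⟩),
        t, mem_map_of_mem _ (mem_filter.2 ⟨mem_univ _, hty⟩), rfl⟩

end Forcing

/-- If a partial assignment fixing `n₁` text variables and `k₁` pattern
variables forces `SM_{n,k}(x,y) = 0`, and `k ≤ √(n-k+1)`, then
`n₁ + k₁ ≥ k + (n-k+1)/k`. -/
theorem maxterm_width_small_k (n k : ℕ) (hk : 1 ≤ k) (hkn : k ≤ n)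
    (hsmall : (k : ℝ) ≤ Real.sqrt ((n : ℝ) - k + 1))
    (ρx : Fin n → Option Bool) (ρy : Fin k → Option Bool)
    (hforce : ∀ (x : Fin n → Bool) (y : Fin k → Bool),
      (∀ i b, ρx i = some b → x i = b) →
      (∀ j b, ρy j = some b → y j = b) →
      ¬ occursIn x y) :
    (k : ℝ) + ((n : ℝ) - k + 1) / k ≤
      (((Finset.univ.filter fun i => (ρx i).isSome = true).card : ℝ) +
        ((Finset.univ.filter fun j => (ρy j).isSome = true).card : ℝ)) := by
  set n₁ := #(fixedVars ρx)
  set k₁ := #(fixedVars ρy)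
  have hwindows : n + 1 - k ≤ n₁ * k₁ :=
    add_one_sub_le_card_fixedVars_mul_card_fixedVars ρx ρy hforce
  have hk₁k : k₁ ≤ k := (card_filter_le _ _).trans_eq (card_fin k)
  have hk₁ : 0 < k₁ := Nat.pos_of_mul_pos_left ((by omega : 0 < n + 1 - k).trans_le hwindows)
  have hN : (n : ℝ) - k + 1 = ((n + 1 - k : ℕ) : ℝ) := by
    rw [Nat.cast_sub (by omega)]; push_cast; ring
  have hkpos : (0 : ℝ) < k := by exact_mod_cast hk
  have hkk : (k : ℝ) * k ≤ (n : ℝ) - k + 1 := by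
    rw [← sq]; exact (Real.le_sqrt' hkpos).1 hsmall
  calc (k : ℝ) + ((n : ℝ) - k + 1) / k = ((n : ℝ) - k + 1) / k + k := add_comm _ _
    _ ≤ ((n : ℝ) - k + 1) / k₁ + k₁ :=
      div_add_self_le_div_add_self (by exact_mod_cast hk₁) (by exact_mod_cast hk₁k) hkk
    _ ≤ n₁ + k₁ := by
      gcongr
      rw [div_le_iff₀ (by exact_mod_cast hk₁), hN]
      exact_mod_cast hwindows
end

section
/- Any DNF formula computing SM_{n,k} for k ≥ 2 has at least 2^(k-1)·(n-k+1) clauses (terms). -/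
/-- Evaluation of a literal over the `n + k` variables (text `⊕` pattern).
A literal is a pair (variable, required value). -/
def litEval {n k : ℕ} (x : Fin n → Bool) (y : Fin k → Bool) :
    (Fin n ⊕ Fin k) × Bool → Prop
  | (Sum.inl i, b) => x i = b
  | (Sum.inr j, b) => y j = b

/-!
Place a pattern `p` with leading bit `1` at offset `i` in an otherwise zero text. If one term
accepted two such inputs `(x, p)` and `(x', q)`, it would also accept `(x ⊓ x', p)` and
`(x ⊓ x', q)`, since text literals are satisfied by the pointwise AND and pattern literals are
untouched. But a text below `x` in which `p` occurs must be `x` itself: the ones of `p`, shifted to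
the occurrence, land among the ones of `p` shifted by `i`, and comparing the first and last one
forces the two shifts to agree. Hence `x = x ⊓ x' = x'`, and the leading `1` recovers offset and
pattern. So the `2^(k-1)·(n-k+1)` inputs need pairwise distinct terms.
-/

def termEval {n k : ℕ} (T : List ((Fin n ⊕ Fin k) × Bool)) (x : Fin n → Bool)
    (y : Fin k → Bool) : Prop :=
  ∀ l ∈ T, litEval x y l

lemma card_le_length_of_separated {α β : Type*} [Fintype α] (D : List β)
    (accepts : β → α → Prop) (hcover : ∀ a, ∃ T ∈ D, accepts T a)
    (hsep : ∀ T ∈ D, ∀ a b, accepts T a → accepts T b → a = b) :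
    Fintype.card α ≤ D.length := by
  classical
  choose f hfD hf using hcover
  have hinj : Function.Injective f := fun a b hab => hsep _ (hfD a) a b (hf a) (hab ▸ hf b)
  calc Fintype.card α = (Finset.univ.image f).card := (Finset.card_image_of_injective _ hinj).symm
    _ ≤ D.toFinset.card := Finset.card_le_card fun T hT => by
        obtain ⟨a, -, rfl⟩ := Finset.mem_image.mp hT
        exact List.mem_toFinset.mpr (hfD a)
    _ ≤ D.length := List.toFinset_card_le D

section Literals

variable {n k : ℕ} {x x' : Fin n → Bool} {y y' : Fin k → Bool}

lemma litEval_inf_left {l : (Fin n ⊕ Fin k) × Bool} (h : litEval x y l) (h' : litEval x' y' l) :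
    litEval (x ⊓ x') y l := by
  rcases l with ⟨v | j, b⟩
  · change x v = b at h
    change x' v = b at h'
    change x v ⊓ x' v = b
    rw [h, h', inf_idem]
  · exact h

lemma termEval_inf_left {T : List ((Fin n ⊕ Fin k) × Bool)} (h : termEval T x y)
    (h' : termEval T x' y') : termEval T (x ⊓ x') y :=
  fun l hl => litEval_inf_left (h l hl) (h' l hl)

lemma termEval_inf_right {T : List ((Fin n ⊕ Fin k) × Bool)} (h : termEval T x y)
    (h' : termEval T x' y') : termEval T (x ⊓ x') y' :=
  inf_comm x' x ▸ termEval_inf_left h' h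

end Literals

/-- The text `0^i p 0^(n-k-i)`. -/
def placeAt (n i : ℕ) {k : ℕ} (p : Fin k → Bool) : Fin n → Bool :=
  fun v => if h : i ≤ v.1 ∧ v.1 - i < k then p ⟨v.1 - i, h.2⟩ else false

section PlaceAt

variable {n k i : ℕ} {p : Fin k → Bool}

lemma placeAt_eq_true_iff {v : Fin n} :
    placeAt n i p v = true ↔ ∃ t : Fin k, i + t.1 = v.1 ∧ p t = true := by
  unfold placeAt
  split_ifs with h
  · refine ⟨fun hp => ⟨⟨v.1 - i, h.2⟩, show i + (v.1 - i) = v.1 by omega, hp⟩, ?_⟩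
    rintro ⟨t, ht, hp⟩
    convert hp using 2
    ext
    simp only
    omega
  · simp only [false_iff, not_exists, not_and]
    intro t ht
    omega

lemma placeAt_apply_add (hi : i + k ≤ n) (t : Fin k) :
    placeAt n i p ⟨i + t.1, by omega⟩ = p t := by
  simp [placeAt]

lemma occursIn_placeAt (hi : i + k ≤ n) : occursIn (placeAt n i p) p :=
  ⟨i, hi, placeAt_apply_add hi⟩

lemma eq_of_shift_preserves_ones {m : ℕ} (hp : ∃ t, p t = true)
    (h : ∀ t, p t = true → ∃ t', p t' = true ∧ m + t.1 = i + t'.1) : m = i := by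
  classical
  set S := Finset.univ.filter fun t => p t = true
  have hS : S.Nonempty := by
    obtain ⟨t, ht⟩ := hp
    exact ⟨t, by simpa [S] using ht⟩
  have hiS : ∀ t, t ∈ S ↔ p t = true := by simp [S]
  have hle : i ≤ m := by
    obtain ⟨t', ht', he⟩ := h _ ((hiS _).mp (S.min'_mem hS))
    have : S.min' hS ≤ t' := S.min'_le t' ((hiS t').mpr ht')
    have : (S.min' hS).1 ≤ t'.1 := this
    omega
  have hge : m ≤ i := by
    obtain ⟨t', ht', he⟩ := h _ ((hiS _).mp (S.max'_mem hS))
    have : t' ≤ S.max' hS := S.le_max' t' ((hiS t').mpr ht')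
    have : t'.1 ≤ (S.max' hS).1 := this
    omega
  omega

lemma eq_placeAt_of_le_of_occursIn (hp : ∃ t, p t = true) {z : Fin n → Bool}
    (hz : z ≤ placeAt n i p) (hocc : occursIn z p) : z = placeAt n i p := by
  obtain ⟨m, hm, hzm⟩ := hocc
  have hmi : m = i := eq_of_shift_preserves_ones hp fun t ht => by
    obtain ⟨t', he, ht'⟩ := placeAt_eq_true_iff.mp (Bool.le_iff_imp.mp (hz _) ((hzm t).trans ht))
    exact ⟨t', ht', he.symm⟩
  subst hmi
  refine le_antisymm hz fun v => Bool.le_iff_imp.mpr fun hv => ?_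
  obtain ⟨t, he, ht⟩ := placeAt_eq_true_iff.mp hv
  rw [show v = ⟨m + t.1, by omega⟩ from Fin.ext he.symm, hzm t, ht]

lemma placeAt_eq_of_termEval {j : ℕ} {q : Fin k → Bool} {T : List ((Fin n ⊕ Fin k) × Bool)}
    (hT : ∀ x y, termEval T x y → occursIn x y) (hp : ∃ t, p t = true) (hq : ∃ t, q t = true)
    (h : termEval T (placeAt n i p) p) (h' : termEval T (placeAt n j q) q) :
    placeAt n i p = placeAt n j q := by
  have hzp := eq_placeAt_of_le_of_occursIn hp inf_le_left (hT _ _ (termEval_inf_left h h'))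
  have hzq := eq_placeAt_of_le_of_occursIn hq inf_le_right (hT _ _ (termEval_inf_right h h'))
  exact hzp.symm.trans hzq

lemma le_of_placeAt_eq_true {v : Fin n} (h : placeAt n i p v = true) : i ≤ v.1 := by
  obtain ⟨t, he, -⟩ := placeAt_eq_true_iff.mp h
  omega

end PlaceAt

lemma placeAt_inj {n k i j : ℕ} {p q : Fin (k + 1) → Bool} (hi : i + (k + 1) ≤ n)
    (hj : j + (k + 1) ≤ n) (hp : p 0 = true) (hq : q 0 = true)
    (h : placeAt n i p = placeAt n j q) : i = j ∧ p = q := by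
  have hji : j ≤ i + 0 := le_of_placeAt_eq_true (h ▸ (placeAt_apply_add hi 0).trans hp)
  have hij : i ≤ j + 0 := le_of_placeAt_eq_true (h ▸ (placeAt_apply_add hj 0).trans hq)
  obtain rfl : i = j := by omega
  refine ⟨rfl, funext fun t => ?_⟩
  rw [← placeAt_apply_add (p := p) hi t, ← placeAt_apply_add (p := q) hi t, h]

/-- Any DNF computing `SM_{n,k}` (for `k ≥ 2`) has at least `2^(k-1)·(n-k+1)`
terms. A DNF is a list of terms, each a list of literals. -/
theorem DNF_lower_bound (n k : ℕ) (hk : 2 ≤ k) (hkn : k ≤ n)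
    (D : List (List ((Fin n ⊕ Fin k) × Bool)))
    (hD : ∀ (x : Fin n → Bool) (y : Fin k → Bool),
      occursIn x y ↔ ∃ T ∈ D, ∀ l ∈ T, litEval x y l) :
    2 ^ (k - 1) * (n - k + 1) ≤ D.length := by
  obtain ⟨k, rfl⟩ : ∃ k', k = k' + 1 := ⟨k - 1, by omega⟩
  have hbound : ∀ i : Fin (n - (k + 1) + 1), i.1 + (k + 1) ≤ n := fun i => by omega
  let accepts (T : List ((Fin n ⊕ Fin (k + 1)) × Bool))
      (a : Fin (n - (k + 1) + 1) × (Fin k → Bool)) : Prop :=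
    termEval T (placeAt n a.1 (Fin.cons true a.2 : Fin (k + 1) → Bool)) (Fin.cons true a.2)
  have hcover a : ∃ T ∈ D, accepts T a := (hD _ _).mp (occursIn_placeAt (hbound a.1))
  have hsep : ∀ T ∈ D, ∀ a b, accepts T a → accepts T b → a = b := by
    intro T hTD a b ha hb
    have hT x y (h : termEval T x y) : occursIn x y := (hD x y).mpr ⟨T, hTD, h⟩
    obtain ⟨hij, hpq⟩ := placeAt_inj (hbound a.1) (hbound b.1) rfl rfl
      (placeAt_eq_of_termEval hT ⟨0, rfl⟩ ⟨0, rfl⟩ ha hb)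
    exact Prod.ext (Fin.ext hij) (Fin.cons_right_injective _ hpq)
  simpa [mul_comm] using card_le_length_of_separated D accepts hcover hsep
end

section
/- Let P = {1p : p ∈ {0,1}^{k-1}} and S = {(0^i p 0^{n-k-i}, p) : p ∈ P, 0 ≤ i ≤ n-k}. Then |S| = 2^{k-1}(n-k+1), every element of S is a 1-input of SM_{n,k}, and for any two distinct elements of S, any monomial (conjunction of literals) accepting both of them also accepts some 0-input of SM_{n,k}. -/
/-- The string `0^i p 0^(n-k-i)`: pattern `p` placed at offset `i`, zeros elsewhere. -/
def shiftStr (n k : ℕ) (p : Fin k → Bool) (i : ℕ) : Fin n → Bool :=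
  fun j => if h : i ≤ j.val ∧ j.val - i < k then p ⟨j.val - i, h.2⟩ else false

namespace FoolingAux

def wt {k : ℕ} (p : Fin k → Bool) : ℕ := (Finset.univ.filter fun a => p a = true).card

lemma shift_true {n k : ℕ} {p : Fin k → Bool} {i : ℕ} {t : Fin n}
    (h : shiftStr n k p i t = true) :
    ∃ h2 : i ≤ t.val ∧ t.val - i < k, p ⟨t.val - i, h2.2⟩ = true := by
  unfold shiftStr at h
  split at h
  · exact ⟨‹_›, h⟩
  · simp at h

lemma shift_eval {n k : ℕ} (p : Fin k → Bool) (i : ℕ) (t : Fin n)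
    (h1 : i ≤ t.val) (h2 : t.val - i < k) :
    shiftStr n k p i t = p ⟨t.val - i, h2⟩ := by
  unfold shiftStr; rw [dif_pos ⟨h1, h2⟩]

lemma shift_true' {n k : ℕ} {p : Fin k → Bool} {i m : ℕ} {hm : m < n}
    (h : shiftStr n k p i ⟨m, hm⟩ = true) :
    ∃ h2 : i ≤ m ∧ m - i < k, p ⟨m - i, h2.2⟩ = true :=
  shift_true h

lemma shift_eval' {n k : ℕ} (p : Fin k → Bool) (i m : ℕ) (hm : m < n)
    (h1 : i ≤ m) (h2 : m - i < k) :
    shiftStr n k p i ⟨m, hm⟩ = p ⟨m - i, h2⟩ :=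
  shift_eval p i _ h1 h2

lemma occ_lemma {n k : ℕ} (hk : 2 ≤ k) {p q : Fin k → Bool} {i : ℕ}
    (hp : p ⟨0, by omega⟩ = true) (hq : q ⟨0, by omega⟩ = true)
    (hocc : occursIn (shiftStr n k p i) q) :
    q = p ∨ wt q < wt p := by
  obtain ⟨m, hm, h⟩ := hocc
  have h0 : shiftStr n k p i ⟨m, by omega⟩ = true := (h ⟨0, by omega⟩).trans hq
  obtain ⟨⟨him, hlt⟩, hptrue⟩ := shift_true' h0
  have hgen : ∀ a : Fin k, q a = true →
      ∃ hb : (m - i) + a.val < k, p ⟨(m - i) + a.val, hb⟩ = true := by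
    intro a ha
    have h2 : shiftStr n k p i ⟨m + a.val, by have := a.isLt; omega⟩ = true :=
      (h a).trans ha
    obtain ⟨⟨h3, h4⟩, h5⟩ := shift_true' h2
    refine ⟨by omega, ?_⟩
    have he : (⟨(m - i) + a.val, by omega⟩ : Fin k) = ⟨m + a.val - i, h4⟩ :=
      Fin.ext (by simp; omega)
    rw [he]; exact h5
  by_cases hd : m = i
  · left
    funext a
    have ha := h a
    rw [shift_eval' p i (m + a.val) (by have := a.isLt; omega) (by omega)
      (by have := a.isLt; omega)] at ha
    rw [← ha]
    congr 1
    exact Fin.ext (by simp; omega)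
  · right
    have hz : (⟨0, by omega⟩ : Fin k) ∈ Finset.univ.filter fun a => p a = true := by
      simp [hp]
    have hcard : (Finset.univ.filter fun a => q a = true).card ≤
        ((Finset.univ.filter fun a => p a = true).erase ⟨0, by omega⟩).card := by
      apply Finset.card_le_card_of_injOn
        (fun a : Fin k => if hb : (m - i) + a.val < k then (⟨(m - i) + a.val, hb⟩ : Fin k) else a)
      · intro a ha
        simp only [Finset.coe_filter, Finset.mem_coe, Set.mem_setOf_eq, Finset.mem_filter, Finset.mem_univ, true_and] at ha
        obtain ⟨hb, hpb⟩ := hgen a ha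
        simp only [dif_pos hb]
        refine Finset.mem_erase.2 ⟨?_, by simp [hpb]⟩
        intro hcontra
        have := congrArg Fin.val hcontra
        simp at this
        omega
      · intro a ha a' ha' hfeq
        simp only [Finset.coe_filter, Set.mem_setOf_eq, Finset.mem_univ, true_and] at ha ha'
        obtain ⟨hb, -⟩ := hgen a ha
        obtain ⟨hb', -⟩ := hgen a' ha'
        dsimp only at hfeq
        rw [dif_pos hb, dif_pos hb'] at hfeq
        have := congrArg Fin.val hfeq
        simp at this
        exact Fin.ext (by omega)
    have herase : ((Finset.univ.filter fun a => p a = true).erase ⟨0, by omega⟩).card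
        = (Finset.univ.filter fun a => p a = true).card - 1 :=
      Finset.card_erase_of_mem hz
    have hpos : 0 < (Finset.univ.filter fun a => p a = true).card :=
      Finset.card_pos.2 ⟨_, hz⟩
    unfold wt
    omega

lemma min_no_occ {n k : ℕ} (hk : 2 ≤ k) {p : Fin k → Bool} {i m : ℕ} {x : Fin n → Bool}
    (hp : p ⟨0, by omega⟩ = true)
    (hle : ∀ t, x t = true → shiftStr n k p i t = true)
    (hm : m + k ≤ n)
    (hocc : ∀ a : Fin k, x ⟨m + a.val, by have := a.isLt; omega⟩ = p a) :
    m = i := by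
  have h0 : x ⟨m, by omega⟩ = true := (hocc ⟨0, by omega⟩).trans hp
  have hs := hle _ h0
  obtain ⟨⟨him, hlt⟩, -⟩ := shift_true' hs
  by_contra hne
  have hd : 1 ≤ m - i := by omega
  have key : ∀ t : ℕ, ∃ hb : t * (m - i) < k, p ⟨t * (m - i), hb⟩ = true := by
    intro t
    induction t with
    | zero => exact ⟨by simpa using (by omega : (0:ℕ) < k), by simpa using hp⟩
    | succ t ih =>
      obtain ⟨h1, h2⟩ := ih
      have hx : x ⟨m + t * (m - i), by omega⟩ = true := by
        have := hocc ⟨t * (m - i), h1⟩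
        rw [this]; exact h2
      have hs2 := hle _ hx
      obtain ⟨⟨h3, h4⟩, h5⟩ := shift_true' hs2
      refine ⟨by rw [Nat.succ_mul]; omega, ?_⟩
      have he : (⟨(t + 1) * (m - i), by rw [Nat.succ_mul]; omega⟩ : Fin k)
          = ⟨m + t * (m - i) - i, h4⟩ := Fin.ext (by simp [Nat.succ_mul]; omega)
      rw [he]; exact h5
  obtain ⟨hlt', -⟩ := key k
  have h6 : k * 1 ≤ k * (m - i) := Nat.mul_le_mul_left k hd
  rw [mul_one] at h6
  exact absurd hlt' (not_lt.mpr h6)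

lemma lit_cross {n k : ℕ} {x₁ x₂ : Fin n → Bool} {y₁ y₂ : Fin k → Bool}
    {l : (Fin n ⊕ Fin k) × Bool}
    (h1 : litEval x₁ y₁ l) (h2 : litEval x₂ y₂ l) : litEval x₁ y₂ l := by
  obtain ⟨s | s, b⟩ := l
  · exact h1
  · exact h2

lemma lit_min {n k : ℕ} {x₁ x₂ : Fin n → Bool} {y : Fin k → Bool}
    {l : (Fin n ⊕ Fin k) × Bool}
    (h1 : litEval x₁ y l) (h2 : litEval x₂ y l) :
    litEval (fun t => x₁ t && x₂ t) y l := by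
  obtain ⟨s | s, b⟩ := l
  · have e1 : x₁ s = b := h1
    have e2 : x₂ s = b := h2
    show (x₁ s && x₂ s) = b
    rw [e1, e2, Bool.and_self]
  · exact h2

lemma shift_at_start {n k : ℕ} (hk : 0 < k) (p : Fin k → Bool) (i : ℕ) (hi : i < n) :
    shiftStr n k p i ⟨i, hi⟩ = p ⟨0, hk⟩ := by
  rw [shift_eval' p i i hi (le_refl i) (by omega)]
  congr 1
  exact Fin.ext (by simp)

lemma card_first_true (k : ℕ) (hk : 1 ≤ k) :
    (Finset.univ.filter fun p : Fin k → Bool => p ⟨0, hk⟩ = true).card = 2 ^ (k - 1) := by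
  set z : Fin k := ⟨0, hk⟩ with hz
  clear_value z
  clear hz
  have hcard : (Finset.univ.filter fun p : Fin k → Bool => p z = true).card
      + (Finset.univ.filter fun p : Fin k → Bool => ¬ p z = true).card
      = 2 ^ k := by
    rw [Finset.card_filter_add_card_filter_not, Finset.card_univ]
    simp
  have heq : (Finset.univ.filter fun p : Fin k → Bool => ¬ p z = true).card
      = (Finset.univ.filter fun p : Fin k → Bool => p z = true).card := by
    apply Finset.card_nbij' (i := fun p => Function.update p z (!(p z)))
      (j := fun p => Function.update p z (!(p z)))
    · intro p hp
      simp only [Finset.mem_coe, Finset.mem_filter, Finset.mem_univ, true_and] at hp ⊢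
      simp only [Bool.not_eq_true] at hp
      simp [hp]
    · intro p hp
      simp only [Finset.mem_coe, Finset.mem_filter, Finset.mem_univ, true_and] at hp ⊢
      simp [hp]
    · intro p _
      funext a
      by_cases ha : a = z
      · subst ha; simp
      · simp [Function.update_of_ne ha]
    · intro p _
      funext a
      by_cases ha : a = z
      · subst ha; simp
      · simp [Function.update_of_ne ha]
  have hpow : 2 * 2 ^ (k - 1) = 2 ^ k := by
    rw [← pow_succ', Nat.sub_add_cancel hk]
  refine Nat.eq_of_mul_eq_mul_left (by norm_num : 0 < 2) ?_
  calc 2 * (Finset.univ.filter fun p : Fin k → Bool => p z = true).card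
      = (Finset.univ.filter fun p : Fin k → Bool => p z = true).card
        + (Finset.univ.filter fun p : Fin k → Bool => ¬ p z = true).card := by
        rw [two_mul, heq]
    _ = 2 ^ k := hcard
    _ = 2 * 2 ^ (k - 1) := hpow.symm

end FoolingAux

open FoolingAux in
/-- The fooling set for the DNF lower bound: with
`S = {(0^i p 0^(n-k-i), p) : p ∈ {0,1}^k, p₁ = 1, 0 ≤ i ≤ n-k}`, we have
`|S| = 2^(k-1)·(n-k+1)`, every element of `S` is a 1-input of `SM_{n,k}`, and
any monomial accepting two distinct elements of `S` also accepts a 0-input. -/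
theorem fooling_set_DNF (n k : ℕ) (hk : 2 ≤ k) (hkn : k ≤ n) :
    ∀ S : Finset ((Fin n → Bool) × (Fin k → Bool)),
      S = Finset.image
            (fun pi : (Fin k → Bool) × Fin (n - k + 1) =>
              (shiftStr n k pi.1 pi.2.val, pi.1))
            (Finset.univ.filter fun pi : (Fin k → Bool) × Fin (n - k + 1) =>
              pi.1 ⟨0, by omega⟩ = true) →
      S.card = 2 ^ (k - 1) * (n - k + 1) ∧
      (∀ s ∈ S, occursIn s.1 s.2) ∧
      (∀ s₁ ∈ S, ∀ s₂ ∈ S, s₁ ≠ s₂ →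
        ∀ T : List ((Fin n ⊕ Fin k) × Bool),
          (∀ l ∈ T, litEval s₁.1 s₁.2 l) →
          (∀ l ∈ T, litEval s₂.1 s₂.2 l) →
          ∃ (x : Fin n → Bool) (y : Fin k → Bool),
            (∀ l ∈ T, litEval x y l) ∧ ¬ occursIn x y) := by
  intro S hS
  subst hS
  refine ⟨?_, ?_, ?_⟩
  · -- cardinality
    rw [Finset.card_image_of_injOn]
    · have hprod : (Finset.univ.filter fun pi : (Fin k → Bool) × Fin (n - k + 1) =>
          pi.1 ⟨0, by omega⟩ = true)
          = (Finset.univ.filter fun p : Fin k → Bool => p ⟨0, by omega⟩ = true) ×ˢ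
            (Finset.univ : Finset (Fin (n - k + 1))) := by
        ext ⟨p, i⟩
        simp
      rw [hprod, Finset.card_product, Finset.card_univ, Fintype.card_fin,
        card_first_true k (by omega)]
    · -- injectivity on the filter
      rintro ⟨p, i⟩ hpi ⟨q, j⟩ hqj heq
      simp only [Finset.coe_filter, Set.mem_setOf_eq, Finset.mem_univ, true_and] at hpi hqj
      dsimp only at hpi hqj heq
      obtain ⟨h1, h2⟩ := Prod.mk.injEq _ _ _ _ ▸ heq
      subst h2
      have hii : i.val < n - k + 1 := i.isLt
      have hjj : j.val < n - k + 1 := j.isLt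
      have hi' : i.val < n := by omega
      have hj' : j.val < n := by omega
      have e1 := congrFun h1 ⟨i.val, hi'⟩
      rw [shift_at_start (by omega) p i.val hi'] at e1
      rw [hpi] at e1
      obtain ⟨⟨hji, -⟩, -⟩ := shift_true' e1.symm
      have e2 := congrFun h1 ⟨j.val, hj'⟩
      rw [shift_at_start (by omega) p j.val hj'] at e2
      rw [hpi] at e2
      obtain ⟨⟨hij, -⟩, -⟩ := shift_true' e2
      have : i = j := Fin.ext (by omega)
      rw [this]
  · -- every element is a 1-input
    intro s hs
    simp only [Finset.mem_image, Finset.mem_filter, Finset.mem_univ, true_and] at hs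
    obtain ⟨⟨p, i⟩, hp, rfl⟩ := hs
    dsimp only at hp ⊢
    have hii : i.val < n - k + 1 := i.isLt
    refine ⟨i.val, by omega, fun t => ?_⟩
    rw [shift_eval' p i.val (i.val + t.val) (by have := t.isLt; omega) (by omega)
      (by have := t.isLt; omega)]
    congr 1
    exact Fin.ext (by simp)
  · -- fooling property
    intro s₁ hs₁ s₂ hs₂ hne T hT1 hT2
    simp only [Finset.mem_image, Finset.mem_filter, Finset.mem_univ, true_and] at hs₁ hs₂
    obtain ⟨⟨p, i⟩, hp, rfl⟩ := hs₁
    obtain ⟨⟨q, j⟩, hq, rfl⟩ := hs₂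
    dsimp only at hp hq hT1 hT2 hne ⊢
    by_cases hpq : p = q
    · subst hpq
      have hij : i.val ≠ j.val := by
        intro h
        exact hne (by rw [Fin.ext h])
      refine ⟨fun t => shiftStr n k p i.val t && shiftStr n k p j.val t, p,
        fun l hl => lit_min (hT1 l hl) (hT2 l hl), ?_⟩
      rintro ⟨m, hm, hocc⟩
      have h1 : m = i.val := by
        apply min_no_occ (x := fun t => shiftStr n k p i.val t && shiftStr n k p j.val t) hk hp _ hm hocc
        intro t ht
        have ht' : (shiftStr n k p i.val t && shiftStr n k p j.val t) = true := ht
        simp only [Bool.and_eq_true] at ht'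
        exact ht'.1
      have h2 : m = j.val := by
        apply min_no_occ (x := fun t => shiftStr n k p i.val t && shiftStr n k p j.val t) hk hp _ hm hocc
        intro t ht
        have ht' : (shiftStr n k p i.val t && shiftStr n k p j.val t) = true := ht
        simp only [Bool.and_eq_true] at ht'
        exact ht'.2
      exact hij (h1 ▸ h2)
    · by_cases hoc : occursIn (shiftStr n k p i.val) q
      · have hwq : wt q < wt p :=
          (occ_lemma hk hp hq hoc).resolve_left (fun h => hpq h.symm)
        refine ⟨shiftStr n k q j.val, p,
          fun l hl => lit_cross (hT2 l hl) (hT1 l hl), ?_⟩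
        intro hoc2
        have hwp : wt p < wt q :=
          (occ_lemma hk hq hp hoc2).resolve_left hpq
        omega
      · exact ⟨shiftStr n k p i.val, q,
          fun l hl => lit_cross (hT1 l hl) (hT2 l hl), hoc⟩
end

section
/- Any Boolean circuit over unbounded fan-in AND, OR, NOT gates computing SM_{n,k} with k ≥ 2 has at least n/2 - 1 gates. -/
/-- Evaluation of an unbounded fan-in gate: `true` = AND, `false` = OR. -/
def gateEval (isAnd : Bool) (vals : List Bool) : Bool :=
  if isAnd then vals.all id else vals.any id

/-- A DeMorgan circuit over variables `V` with `s` gates of unbounded fan-in.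
Each gate is an AND or an OR of literals: (possibly negated) input variables or
(possibly negated, NOT gates are free) outputs of earlier gates. -/
structure Circuit (V : Type) (s : ℕ) where
  gty : Fin s → Bool
  wires : Fin s → List ((V ⊕ Fin s) × Bool)
  acyc : ∀ g : Fin s, ∀ w ∈ wires g, ∀ g' : Fin s, w.1 = Sum.inr g' → g'.val < g.val
  out : (V ⊕ Fin s) × Bool

def wireVal {V : Type} {s : ℕ} (a : V → Bool) (vals : Fin s → Bool) :
    (V ⊕ Fin s) × Bool → Bool
  | (Sum.inl v, neg) => xor neg (a v)
  | (Sum.inr g, neg) => xor neg (vals g)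

def Consistent {V : Type} {s : ℕ} (C : Circuit V s) (a : V → Bool)
    (vals : Fin s → Bool) : Prop :=
  ∀ g, vals g = gateEval (C.gty g) ((C.wires g).map (wireVal a vals))

def Computes {V : Type} {s : ℕ} (C : Circuit V s) (f : (V → Bool) → Prop) : Prop :=
  ∀ a, ∃ vals, Consistent C a vals ∧ (wireVal a vals C.out = true ↔ f a)

namespace Circuit

variable {V : Type} {s : ℕ}

lemma gateEval_eq_not_of_mem {isAnd : Bool} {vals : List Bool} (h : (!isAnd) ∈ vals) :
    gateEval isAnd vals = !isAnd := by
  cases isAnd <;> simpa [gateEval] using h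

lemma wireVal_congr {a a' : V → Bool} {vals vals' : Fin s → Bool} {w : (V ⊕ Fin s) × Bool}
    (hin : ∀ u, w.1 = Sum.inl u → a u = a' u) (hg : ∀ g, w.1 = Sum.inr g → vals g = vals' g) :
    wireVal a vals w = wireVal a' vals' w := by
  rcases w with ⟨u | g, neg⟩
  · simp [wireVal, hin u rfl]
  · simp [wireVal, hg g rfl]

def GatesIndepOn (C : Circuit V s) (F : Finset V) (ρ : V → Bool) (v : V) (m : ℕ) : Prop :=
  ∀ ⦃a a' : V → Bool⦄ ⦃vals vals' : Fin s → Bool⦄,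
    (∀ u ∈ F, a u = ρ u) → (∀ u ∈ F, a' u = ρ u) → (∀ u ≠ v, a u = a' u) →
    Consistent C a vals → Consistent C a' vals' → ∀ g : Fin s, g.val < m → vals g = vals' g

variable {C : Circuit V s} {F : Finset V} {ρ : V → Bool} {v : V} {m : ℕ}

lemma GatesIndepOn.succ_of_forall_ne (h : C.GatesIndepOn F ρ v m) (g : Fin s) (hg : g.val = m)
    (hv : ∀ w ∈ C.wires g, w.1 ≠ Sum.inl v) : C.GatesIndepOn F ρ v (m + 1) := by
  intro a a' vals vals' ha ha' haa' hc hc' g' hg'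
  rcases Nat.lt_succ_iff_lt_or_eq.mp hg' with hlt | heq
  · exact h ha ha' haa' hc hc' g' hlt
  obtain rfl : g' = g := Fin.ext (heq.trans hg.symm)
  rw [hc g', hc' g']
  congr 1
  refine List.map_congr_left fun w hw => wireVal_congr ?_ ?_
  · rintro u hu
    exact haa' u fun huv => hv w hw (huv ▸ hu)
  · rintro g'' hg''
    exact h ha ha' haa' hc hc' g'' (heq ▸ C.acyc g' w hw g'' hg'')

lemma GatesIndepOn.succ_of_fix [DecidableEq V] (h : C.GatesIndepOn F ρ v m) (g : Fin s)
    (hg : g.val = m) {w : (V ⊕ Fin s) × Bool} (hw : w ∈ C.wires g) {u : V}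
    (hu : w.1 = Sum.inl u) (huF : u ∉ F) :
    C.GatesIndepOn (insert u F) (Function.update ρ u (xor w.2 (!C.gty g))) v (m + 1) := by
  set ρ' := Function.update ρ u (xor w.2 (!C.gty g)) with hρ'
  have hF : ∀ b : V → Bool, (∀ u' ∈ insert u F, b u' = ρ' u') → ∀ u' ∈ F, b u' = ρ u' :=
    fun b hb u' hu' => by
      rw [hb u' (Finset.mem_insert_of_mem hu'), hρ',
        Function.update_of_ne (ne_of_mem_of_not_mem hu' huF)]
  -- the literal `w` now carries the controlling value `!C.gty g` of the gate
  have hforced : ∀ b vs, (∀ u' ∈ insert u F, b u' = ρ' u') → Consistent C b vs →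
      vs g = !C.gty g := fun b vs hb hcs => by
    rw [hcs g]
    refine gateEval_eq_not_of_mem (List.mem_map.mpr ⟨w, hw, ?_⟩)
    obtain ⟨w1, neg⟩ := w
    obtain rfl : w1 = Sum.inl u := hu
    simp [wireVal, hb u (Finset.mem_insert_self u F), hρ']
  intro a a' vals vals' ha ha' haa' hc hc' g' hg'
  rcases Nat.lt_succ_iff_lt_or_eq.mp hg' with hlt | heq
  · exact h (hF a ha) (hF a' ha') haa' hc hc' g' hlt
  obtain rfl : g' = g := Fin.ext (heq.trans hg.symm)
  rw [hforced a vals ha hc, hforced a' vals' ha' hc']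

variable (C) in
theorem exists_gatesIndepOn (S : Finset V) :
    ∀ m ≤ s, ∃ F ⊆ S, F.card ≤ m ∧ ∃ ρ : V → Bool, ∀ v ∈ S, v ∉ F → C.GatesIndepOn F ρ v m := by
  classical
  intro m
  induction m with
  | zero => exact fun _ => ⟨∅, Finset.empty_subset S, le_rfl, fun _ => false,
      fun _ _ _ _ _ _ _ _ _ _ _ _ g hg => absurd hg g.val.not_lt_zero⟩
  | succ m ih =>
    intro hm
    obtain ⟨F, hFS, hFcard, ρ, hρ⟩ := ih (by omega)
    let g : Fin s := ⟨m, by omega⟩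
    by_cases hfix : ∃ w ∈ C.wires g, ∃ u ∈ S, u ∉ F ∧ w.1 = Sum.inl u
    · obtain ⟨w, hw, u, huS, huF, hu⟩ := hfix
      refine ⟨insert u F, Finset.insert_subset huS hFS, (Finset.card_insert_le u F).trans
        (by omega), Function.update ρ u (xor w.2 (!C.gty g)), fun v hvS hvF => ?_⟩
      exact (hρ v hvS fun h => hvF (Finset.mem_insert_of_mem h)).succ_of_fix g rfl hw hu huF
    · push Not at hfix
      exact ⟨F, hFS, by omega, ρ, fun v hvS hvF =>
        (hρ v hvS hvF).succ_of_forall_ne g rfl fun w hw => hfix w hw v hvS hvF⟩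

lemma GatesIndepOn.wireVal_out_eq (h : C.GatesIndepOn F ρ v s) (hout : C.out.1 ≠ Sum.inl v)
    {a a' : V → Bool} {vals vals' : Fin s → Bool} (ha : ∀ u ∈ F, a u = ρ u)
    (ha' : ∀ u ∈ F, a' u = ρ u) (haa' : ∀ u ≠ v, a u = a' u) (hc : Consistent C a vals)
    (hc' : Consistent C a' vals') : wireVal a vals C.out = wireVal a' vals' C.out :=
  wireVal_congr (fun u hu => haa' u fun huv => hout (huv ▸ hu))
    (fun g _ => h ha ha' haa' hc hc' g g.isLt)

end Circuit

theorem Computes.exists_restriction_indep {V : Type} {s : ℕ} [DecidableEq V] {C : Circuit V s}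
    {f : (V → Bool) → Prop} (hC : Computes C f) (S : Finset V) (hS : s + 2 ≤ S.card) :
    ∃ F ⊆ S, ∃ ρ : V → Bool, ∃ v ∈ S, v ∉ F ∧
      ∀ a, (∀ u ∈ F, a u = ρ u) → ∀ c, (f a ↔ f (Function.update a v c)) := by
  obtain ⟨F, hFS, hFcard, ρ, hρ⟩ := C.exists_gatesIndepOn S s le_rfl
  have hfree : 1 < (S \ F).card := by
    have := Finset.le_card_sdiff F S
    omega
  obtain ⟨v, hv, hout⟩ : ∃ v ∈ S \ F, C.out.1 ≠ Sum.inl v := by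
    rcases hw : C.out.1 with w | g
    · obtain ⟨v, hv, hvw⟩ := Finset.exists_mem_ne hfree w
      exact ⟨v, hv, fun h => hvw (Sum.inl_injective h).symm⟩
    · obtain ⟨v, hv⟩ := Finset.card_pos.mp (by omega : 0 < (S \ F).card)
      exact ⟨v, hv, Sum.inr_ne_inl⟩
  obtain ⟨hvS, hvF⟩ := Finset.mem_sdiff.mp hv
  refine ⟨F, hFS, ρ, v, hvS, hvF, fun a ha c => ?_⟩
  have ha' : ∀ u ∈ F, Function.update a v c u = ρ u := fun u hu => by
    rw [Function.update_of_ne (ne_of_mem_of_not_mem hu hvF), ha u hu]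
  obtain ⟨vals, hc, hf⟩ := hC a
  obtain ⟨vals', hc', hf'⟩ := hC (Function.update a v c)
  rw [← hf, ← hf', (hρ v hvS hvF).wireVal_out_eq hout ha ha'
    (fun u hu => (Function.update_of_ne hu c a).symm) hc hc']

section occursIn

variable {n k : ℕ}

lemma occursIn_window (x : Fin n → Bool) {w : ℕ} (hw : w + k ≤ n) :
    occursIn x (fun t : Fin k => x ⟨w + t, by omega⟩) :=
  ⟨w, hw, fun _ => rfl⟩

lemma not_occursIn_of_adjacent {x : Fin n → Bool} {y : Fin k → Bool} {b : Bool}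
    (hx : ∀ j (hj : j + 1 < n), x ⟨j, by omega⟩ = b → x ⟨j + 1, hj⟩ ≠ b)
    {t : ℕ} (ht : t + 1 < k) (hy₀ : y ⟨t, by omega⟩ = b) (hy₁ : y ⟨t + 1, ht⟩ = b) :
    ¬ occursIn x y := by
  rintro ⟨i, hik, hocc⟩
  refine hx (i + t) (by omega) ?_ ?_
  · rw [← hy₀, ← hocc]
  · rw [← hy₁, ← hocc]
    rfl

theorem exists_not_occursIn_occursIn_update (hk : 2 ≤ k) (hkn : k ≤ n) (D : Set (Fin n))
    (hD : ∀ i ∈ D, i.val % 2 = 1) (r : Fin n → Bool) {p : Fin n} (hp : p.val % 2 = 1)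
    (hpD : p ∉ D) :
    ∃ x : Fin n → Bool, (∀ i ∈ D, x i = r i) ∧
      ∃ y : Fin k → Bool, ¬ occursIn x y ∧ occursIn (Function.update x p (!x p)) y := by
  classical
  set b := !r ⟨p.val - 2, (Nat.sub_le _ _).trans_lt p.isLt⟩ with hb
  let x : Fin n → Bool := fun i => if i ∈ D then r i else if i.val + 1 = p.val then b else !b
  have hxp : x p = !b := by simp [x, hpD]
  have hx_eq_b : ∀ i, x i = b → i.val % 2 = 1 ∧ i.val + 2 ≠ p.val ∧ i ≠ p ∨ i.val + 1 = p.val := by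
    intro i hi
    by_cases hiD : i ∈ D
    · refine Or.inl ⟨hD i hiD, fun hip => ?_, fun h => hpD (h ▸ hiD)⟩
      obtain rfl : i = ⟨p.val - 2, (Nat.sub_le _ _).trans_lt p.isLt⟩ :=
        Fin.ext (by simp only; omega)
      simp [x, hiD, hb] at hi
    · by_cases hip : i.val + 1 = p.val
      · exact Or.inr hip
      · simp [x, hiD, hip] at hi
  have hadj : ∀ j (hj : j + 1 < n), x ⟨j, by omega⟩ = b → x ⟨j + 1, hj⟩ ≠ b := by
    intro j hj h₀ h₁
    have h₀' := hx_eq_b _ h₀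
    have h₁' := hx_eq_b _ h₁
    simp only [ne_eq, Fin.ext_iff] at h₀' h₁'
    omega
  set w := min (p.val - 1) (n - k)
  have hw : w + k ≤ n := by omega
  refine ⟨x, fun i hi => if_pos hi, fun t => Function.update x p b ⟨w + t, by omega⟩, ?_, ?_⟩
  · refine not_occursIn_of_adjacent hadj (t := p.val - 1 - w) (by omega) ?_ ?_
    · have hne : (⟨w + (p.val - 1 - w), by omega⟩ : Fin n) ≠ p := by simp [Fin.ext_iff]; omega
      have hnD : (⟨w + (p.val - 1 - w), by omega⟩ : Fin n) ∉ D := fun h => by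
        have := hD _ h; simp only at this; omega
      simp only [Function.update_of_ne hne, x, if_neg hnD]
      rw [if_pos (by omega)]
    · have hp' : (⟨w + (p.val - 1 - w + 1), by omega⟩ : Fin n) = p := Fin.ext (by simp only; omega)
      simp only [hp', Function.update_self]
  · rw [hxp, Bool.not_not]
    exact occursIn_window _ hw

end occursIn

def oddVar (n k : ℕ) : Fin (n / 2) ↪ Fin n ⊕ Fin k where
  toFun i := Sum.inl ⟨2 * i + 1, by omega⟩
  inj' i j h := Fin.ext (by simpa using h)

lemma exists_odd_of_mem_map_oddVar {n k : ℕ} {u : Fin n ⊕ Fin k}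
    (hu : u ∈ Finset.univ.map (oddVar n k)) : ∃ j : Fin n, u = Sum.inl j ∧ j.val % 2 = 1 := by
  obtain ⟨i, -, rfl⟩ := Finset.mem_map.mp hu
  exact ⟨⟨2 * i + 1, by omega⟩, rfl, by simp⟩

/-- Any unbounded fan-in DeMorgan circuit computing `SM_{n,k}` with `k ≥ 2`
has at least `n/2 - 1` gates. -/
theorem circuit_lower_bound (n k s : ℕ) (hk : 2 ≤ k) (hkn : k ≤ n)
    (C : Circuit (Fin n ⊕ Fin k) s)
    (hC : Computes C (fun a =>
      occursIn (fun i => a (Sum.inl i)) (fun j => a (Sum.inr j)))) :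
    n / 2 - 1 ≤ s := by
  by_contra! hlt
  obtain ⟨F, hFS, ρ, v, hvS, hvF, hindep⟩ :=
    hC.exists_restriction_indep (Finset.univ.map (oddVar n k)) (by simp; omega)
  have hFodd u (hu : u ∈ F) := exists_odd_of_mem_map_oddVar (hFS hu)
  obtain ⟨p, rfl, hp⟩ := exists_odd_of_mem_map_oddVar hvS
  obtain ⟨x, hxρ, y, hxy, hx'y⟩ := exists_not_occursIn_occursIn_update hk hkn
    {j | Sum.inl j ∈ F} (fun j hj => by obtain ⟨_, ⟨⟩, hodd⟩ := hFodd _ hj; exact hodd)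
    (fun j => ρ (Sum.inl j)) hp hvF
  have hxF : ∀ u ∈ F, Sum.elim x y u = ρ u := fun u hu => by
    obtain ⟨j, rfl, -⟩ := hFodd u hu
    exact hxρ j hu
  have hdep := hindep (Sum.elim x y) hxF (!x p)
  simp only [Sum.update_elim_inl, Sum.elim_inl, Sum.elim_inr] at hdep
  exact hxy (hdep.mpr hx'y)
end

section
/- Let Σ be an alphabet with |Σ| ≥ 2 and m ≥ 1 an integer. There exists a set T_m of at least |Σ|^{m-1} strings, each of length m + ⌈log₂ m⌉ + 2 over Σ, such that for any two distinct strings τ₁, τ₂ ∈ T_m, the concatenation τ₁τ₂ does not contain any string of T_m \ {τ₁, τ₂} as a contiguous substring. -/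
/-!
Take the words `s ++ 0ⁿ ++ [1]` with `n = ⌈log₂ m⌉ + 1`, where `s` ranges over the words of
length `m` avoiding `0ⁿ`. A union bound over the `≤ m` starting positions of a forbidden block
shows that at most `m · |Σ|^(m-n) ≤ |Σ|^(m-1)` words of length `m` contain `0ⁿ`, so at least
`|Σ|^(m-1)` survive. An occurrence of such a word in `τ₁ ++ τ₂` that straddles the border must
end with the block `0ⁿ1`; this block can neither overlap the final `1` of `τ₁` nor lie inside the
`0ⁿ`-free part of `τ₂`.
-/

open Finset

namespace List

variable {α : Type*} {a b : α} {n : ℕ} {l s x l₁ l₂ : List α}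

theorem IsPrefix.prefix_of_append_replicate (hab : a ≠ b) (h : l <+: s ++ replicate n a)
    (hl : [b] <:+ l) : l <+: s := by
  induction n with
  | zero => simpa using h
  | succ n ih =>
    rw [replicate_succ', ← append_assoc, prefix_concat_iff] at h
    rcases h with rfl | h
    · exact absurd (singleton_suffix_append_singleton_iff.1 hl).symm hab
    · exact ih h

theorem not_replicate_append_suffix_append (hab : a ≠ b) (hs : ¬ replicate n a <:+: s)
    (h₁ : l₁ <:+ x ++ [b]) (h₂ : l₂ <+: s ++ replicate n a) (hl₂ : l₂ ≠ []) :
    ¬ replicate n a ++ [b] <:+ l₁ ++ l₂ := by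
  intro h
  have hb₂ : [b] <:+ l₂ := suffix_of_suffix_length_le ((suffix_append _ _).trans h)
    (suffix_append _ _) (length_pos_iff.2 hl₂)
  have hl₂s : l₂ <+: s := h₂.prefix_of_append_replicate hab hb₂
  rcases le_or_gt (replicate n a ++ [b]).length l₂.length with hlen | hlen
  · exact hs ((prefix_append _ _).isInfix.trans
      ((suffix_of_suffix_length_le h (suffix_append _ _) hlen).isInfix.trans hl₂s.isInfix))
  -- The block starts inside `l₁`; its part `v` there is a proper prefix of `aⁿb` ending in `b`.
  · obtain ⟨v, hv⟩ := suffix_of_suffix_length_le (suffix_append _ _) h hlen.le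
    have hv₀ : v ≠ [] := by rintro rfl; simp_all
    have hvl₁ : v <:+ l₁ := suffix_append_self_iff.1 (hv ▸ h)
    have hbv : [b] <:+ v := suffix_of_suffix_length_le (suffix_append _ _) (hvl₁.trans h₁)
      (length_pos_iff.2 hv₀)
    have hva : v <+: replicate n a := by
      refine (prefix_concat_iff.1 ⟨l₂, hv⟩).resolve_left fun hv' => hl₂ ?_
      rw [hv'] at hv
      simpa using hv
    exact hab (eq_of_mem_replicate (hva.subset (hbv.subset (mem_singleton_self b)))).symm

theorem eq_or_eq_of_infix_append (hab : a ≠ b) {s₁ s₂ s₃ : List α}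
    (hs₂ : ¬ replicate n a <:+: s₂) (h₁₃ : s₁.length = s₃.length) (h₂₃ : s₂.length = s₃.length)
    (h : s₃ ++ replicate n a ++ [b] <:+:
      (s₁ ++ replicate n a ++ [b]) ++ (s₂ ++ replicate n a ++ [b])) :
    s₃ ++ replicate n a ++ [b] = s₁ ++ replicate n a ++ [b] ∨
      s₃ ++ replicate n a ++ [b] = s₂ ++ replicate n a ++ [b] := by
  rcases infix_append_iff_ne_nil.1 h with h | h | ⟨l₁, l₂, hl₁, hl₂, h₃, h₁, h₂⟩
  · exact .inl (h.eq_of_length (by simp [h₁₃]))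
  · exact .inr (h.eq_of_length (by simp [h₂₃]))
  · have h₂' : l₂ <+: s₂ ++ replicate n a := by
      refine (prefix_concat_iff.1 h₂).resolve_left fun hl => hl₁ ?_
      have := congrArg length h₃
      simp only [hl, length_append] at this
      exact length_eq_zero_iff.1 (by omega)
    refine absurd ?_ (not_replicate_append_suffix_append hab hs₂ h₁ h₂' hl₂)
    rw [← h₃, append_assoc]
    exact suffix_append _ _

end List

def listsOfLength (α : Type*) [Fintype α] (n : ℕ) : Finset (List α) :=
  (univ : Finset (List.Vector α n)).map ⟨List.Vector.toList, List.Vector.toList_injective⟩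

section Counting

variable {α : Type*} [Fintype α]

@[simp]
theorem mem_listsOfLength {n : ℕ} {l : List α} : l ∈ listsOfLength α n ↔ l.length = n := by
  refine ⟨?_, fun h => ?_⟩
  · simp only [listsOfLength, mem_map, mem_univ, true_and, Function.Embedding.coeFn_mk]
    rintro ⟨v, rfl⟩
    exact v.toList_length
  · exact mem_map.2 ⟨⟨l, h⟩, mem_univ _, rfl⟩

@[simp]
theorem card_listsOfLength (n : ℕ) : (listsOfLength α n).card = Fintype.card α ^ n := by
  simp [listsOfLength, card_vector]

variable [DecidableEq α]

theorem card_filter_infix_le (p : List α) (m : ℕ) :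
    ((listsOfLength α m).filter (p <:+: ·)).card ≤
      (m + 1 - p.length) * Fintype.card α ^ (m - p.length) := by
  have hsub : (listsOfLength α m).filter (p <:+: ·) ⊆
      (range (m + 1 - p.length) ×ˢ listsOfLength α (m - p.length)).image
        fun iv => iv.2.take iv.1 ++ p ++ iv.2.drop iv.1 := by
    intro s hs
    obtain ⟨hsm, u, w, rfl⟩ := mem_filter.1 hs
    simp only [mem_listsOfLength, List.length_append] at hsm
    refine mem_image.2 ⟨(u.length, u ++ w), ?_, by simp⟩
    simp only [mem_product, mem_range, mem_listsOfLength, List.length_append]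
    omega
  calc _ ≤ _ := card_le_card hsub
    _ ≤ _ := card_image_le
    _ = _ := by rw [card_product, card_range, card_listsOfLength]

theorem pow_pred_le_card_filter_not_infix (hα : 2 ≤ Fintype.card α) {m : ℕ} {p : List α}
    (hp : 0 < p.length) (hpm : p.length ≤ m) (hmp : m ≤ Fintype.card α ^ (p.length - 1)) :
    Fintype.card α ^ (m - 1) ≤ ((listsOfLength α m).filter (¬ p <:+: ·)).card := by
  have hsplit := card_filter_add_card_filter_not (s := listsOfLength α m) (p <:+: ·)
  rw [card_listsOfLength] at hsplit
  set c := Fintype.card α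
  have hbad : ((listsOfLength α m).filter (p <:+: ·)).card ≤ c ^ (m - 1) :=
    calc _ ≤ (m + 1 - p.length) * c ^ (m - p.length) := card_filter_infix_le p m
      _ ≤ c ^ (p.length - 1) * c ^ (m - p.length) := by gcongr; omega
      _ = c ^ (m - 1) := by rw [← pow_add]; congr 1; omega
  have hdouble : 2 * c ^ (m - 1) ≤ c ^ m := by
    calc 2 * c ^ (m - 1) ≤ c * c ^ (m - 1) := by gcongr
      _ = c ^ m := by rw [← pow_succ']; congr 1; omega
  omega

end Counting

/-- For any alphabet `σ` with at least two symbols and any `m ≥ 1`, there is a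
set `T` of at least `|σ|^(m-1)` strings, each of length `m + ⌈log₂ m⌉ + 2`,
such that for any two distinct `τ₁, τ₂ ∈ T` the concatenation `τ₁ ++ τ₂`
contains no element of `T \ {τ₁, τ₂}` as a contiguous substring. -/
theorem exists_good_pattern_family (σ : Type) [Fintype σ] [DecidableEq σ]
    (h2 : 2 ≤ Fintype.card σ) (m : ℕ) (hm : 1 ≤ m) :
    ∃ T : Finset (List σ),
      Fintype.card σ ^ (m - 1) ≤ T.card ∧
      (∀ τ ∈ T, τ.length = m + Nat.clog 2 m + 2) ∧
      (∀ τ₁ ∈ T, ∀ τ₂ ∈ T, τ₁ ≠ τ₂ →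
        ∀ τ₃ ∈ T, τ₃ ≠ τ₁ → τ₃ ≠ τ₂ → ¬ τ₃ <:+: (τ₁ ++ τ₂)) := by
  obtain ⟨a, b, hab⟩ := Fintype.exists_pair_of_one_lt_card h2
  set k := Nat.clog 2 m
  have hkm : k + 1 ≤ m := by
    have : m ≤ 2 ^ (m - 1) := by have := Nat.lt_two_pow_self (n := m - 1); omega
    have := (Nat.clog_le_iff_le_pow one_lt_two).2 this
    omega
  have hmk : m ≤ Fintype.card σ ^ k :=
    (Nat.le_pow_clog one_lt_two m).trans (Nat.pow_le_pow_left h2 k)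
  set S := (listsOfLength σ m).filter (¬ List.replicate (k + 1) a <:+: ·)
  have hS : ∀ {s}, s ∈ S → s.length = m ∧ ¬ List.replicate (k + 1) a <:+: s := by
    intro s hs
    simpa [S] using hs
  refine ⟨S.image (· ++ List.replicate (k + 1) a ++ [b]), ?_, ?_, ?_⟩
  · rw [card_image_of_injective _ fun s t h => by simpa using h]
    exact pow_pred_le_card_filter_not_infix h2 (by simp) (by simpa) (by simpa)
  · simp only [mem_image]
    rintro _ ⟨s, hs, rfl⟩
    simp only [List.length_append, List.length_replicate, List.length_singleton, (hS hs).1]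
    omega
  · simp only [mem_image]
    rintro _ ⟨s₁, hs₁, rfl⟩ _ ⟨s₂, hs₂, rfl⟩ - _ ⟨s₃, hs₃, rfl⟩ h₃₁ h₃₂ h
    have hlen : ∀ {s t}, s ∈ S → t ∈ S → s.length = t.length := fun hs ht => by
      rw [(hS hs).1, (hS ht).1]
    exact (List.eq_or_eq_of_infix_append hab (hS hs₂).2 (hlen hs₁ hs₃) (hlen hs₂ hs₃) h).elim
      h₃₁ h₃₂
end

section
/- Let Σ be a finite alphabet with |Σ| ≥ 2 and k, n with (k - log₂ k - 5)·log₂|Σ| ≤ log₂ n - log₂ log₂ n. Then the VC dimension of H_{k,Σ} on strings of length n is at least ⌊(m-1)·log₂|Σ|⌋ where m = ⌊min(k - log₂ k - 3, log₂ n/log₂|Σ| - log₂ log₂ n/log₂|Σ| + 1)⌋ ≥ 1; i.e., VC(H_{k,Σ}) ≥ min((k - O(log k))·log|Σ|, log n - O(log log n)). -/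
/-!
Fix letters `a ≠ b`. A block `a^r b w` with `w ∈ Σ^m` containing no run of `r` letters `a`
can be read off a concatenation of such blocks only at a block boundary, since there the `b`
is preceded by `r` letters `a`; so it occurs in the concatenation iff `w` is one of the
concatenated codewords. A union bound shows that for `m ≤ 2^(r-1)` there are at least
`|Σ|^(m-1) ≥ 2^d` such `w`; index them by `v ∈ {0,1}^d` and let `x_i` concatenate the blocks of
the `v` with `v_i = 1`. The block of `v = (f(x_i))_i` then realises `f`. With `r = ⌊log₂ m⌋ + 2`
the logarithmic hypotheses make a block fit into length `k` and `2^(d-1)` blocks into length `n`.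
-/

/-- Pattern `p` (a list) occurs as a contiguous substring of `s : Fin n → A`. -/
def occursL {A : Type} {n : ℕ} (p : List A) (s : Fin n → A) : Prop :=
  ∃ i, ∃ _ : i + p.length ≤ n,
    ∀ t : Fin p.length, s ⟨i + t.val, by have := t.isLt; omega⟩ = p.get t

open Finset

def PatternShattered {A : Type} {n : ℕ} (k : ℕ) (X : Finset (Fin n → A)) : Prop :=
  ∀ f : (Fin n → A) → Bool, ∃ p : List A, p.length ≤ k ∧ ∀ s ∈ X, (occursL p s ↔ f s = true)

theorem occursL_ofFn_iff {A : Type} {n L : ℕ} (g : Fin L → A) (S : ℕ → A) :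
    occursL (List.ofFn g) (fun p : Fin n => S p) ↔
      ∃ q, q + L ≤ n ∧ ∀ t : Fin L, S (q + t) = g t := by
  simp only [occursL, List.length_ofFn, List.get_ofFn]
  constructor
  · rintro ⟨q, hq, h⟩
    exact ⟨q, hq, fun t => by simpa using h (Fin.cast (by simp) t)⟩
  · rintro ⟨q, hq, h⟩
    exact ⟨q, hq, fun t => by simpa using h (Fin.cast (by simp) t)⟩

theorem card_filter_forall_mem_eq {κ A : Type*} [Fintype κ] [DecidableEq κ] [Fintype A]
    (s : Finset κ) (a : A) [DecidablePred fun g : κ → A => ∀ x ∈ s, g x = a] :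
    #{g : κ → A | ∀ x ∈ s, g x = a} = Fintype.card A ^ (Fintype.card κ - #s) := by
  have : ({g : κ → A | ∀ x ∈ s, g x = a} : Finset (κ → A)) =
      Fintype.piFinset fun x => if x ∈ s then {a} else univ := by
    ext g
    simp only [mem_filter, mem_univ, true_and, Fintype.mem_piFinset]
    refine forall_congr' fun x => ?_
    split_ifs with hx <;> simp [hx]
  rw [this, Fintype.card_piFinset]
  simp only [apply_ite card, card_singleton, card_univ]
  rw [prod_ite, prod_const, prod_const, one_pow, one_mul, filter_not, card_sdiff]
  simp

def AvoidsRun {A : Type*} {m : ℕ} (a : A) (r : ℕ) (w : Fin m → A) : Prop :=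
  ∀ i, i + r ≤ m → ∃ x : Fin m, (x : ℕ) ∈ Ico i (i + r) ∧ w x ≠ a

theorem card_filter_val_mem_Ico {m : ℕ} (i r : ℕ) (h : i + r ≤ m) :
    #{x : Fin m | (x : ℕ) ∈ Ico i (i + r)} = r := by
  rw [← card_map Fin.valEmbedding]
  convert Nat.card_Ico i (i + r) using 2
  · ext x
    simp only [mem_map, mem_filter, mem_univ, true_and, Fin.valEmbedding_apply]
    exact ⟨by rintro ⟨y, hy, rfl⟩; exact hy, fun hx => ⟨⟨x, by simp at hx; omega⟩, hx, rfl⟩⟩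
  · omega

open Classical in
/-- A union bound over the at most `m + 1 - r` possible positions of a run. -/
theorem pow_pred_le_card_avoidsRun {A : Type*} [Fintype A] (a : A) {m r : ℕ}
    (hc : 2 ≤ Fintype.card A) (hr : 1 ≤ r) (hm : m ≤ 2 ^ (r - 1)) :
    Fintype.card A ^ (m - 1) ≤ #{w : Fin m → A | AvoidsRun a r w} := by
  set c := Fintype.card A
  have hbad : #{w : Fin m → A | ¬ AvoidsRun a r w} ≤ (m + 1 - r) * c ^ (m - r) := by
    calc _ ≤ #((range (m + 1 - r)).biUnion fun i => {w : Fin m → A |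
            ∀ x ∈ ({x : Fin m | (x : ℕ) ∈ Ico i (i + r)} : Finset _), w x = a}) := by
          refine card_le_card fun w hw => ?_
          simp only [AvoidsRun, mem_filter, mem_univ, true_and, not_forall, not_exists,
            not_and, not_not, mem_biUnion, mem_range] at hw ⊢
          obtain ⟨i, hi, hrun⟩ := hw
          exact ⟨i, by omega, hrun⟩
      _ ≤ ∑ _i ∈ range (m + 1 - r), c ^ (m - r) := by
          refine card_biUnion_le.trans (sum_le_sum fun i hi => ?_)
          rw [card_filter_forall_mem_eq, Fintype.card_fin,
            card_filter_val_mem_Ico i r (by simp at hi; omega)]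
      _ = (m + 1 - r) * c ^ (m - r) := by rw [sum_const, card_range, smul_eq_mul]
  have htotal : #{w : Fin m → A | AvoidsRun a r w} + #{w : Fin m → A | ¬ AvoidsRun a r w}
      = c ^ m := by
    rw [card_filter_add_card_filter_not, card_univ, Fintype.card_fun, Fintype.card_fin]
  suffices (m + 1 - r) * c ^ (m - r) + c ^ (m - 1) ≤ c ^ m by omega
  rcases le_or_gt r m with hrm | hrm
  · have hfew : m + 1 - r ≤ c ^ (r - 1) :=
      (by omega : m + 1 - r ≤ m).trans (hm.trans (Nat.pow_le_pow_left (by omega) _))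
    have hsplit : c ^ (r - 1) * c ^ (m - r) = c ^ (m - 1) := by
      rw [← pow_add]; congr 1; omega
    have hdouble : 2 * c ^ (m - 1) ≤ c ^ m := by
      rw [show m = m - 1 + 1 by omega, pow_succ', Nat.add_sub_cancel]
      exact Nat.mul_le_mul_right _ hc
    nlinarith [Nat.mul_le_mul_right (c ^ (m - r)) hfew]
  · rw [show m + 1 - r = 0 by omega, zero_mul, zero_add]
    exact Nat.pow_le_pow_right (by omega) (by omega)

section Blocks

variable {A : Type} {ι : Type*} {m : ℕ} (a b : A) (r : ℕ) (w : ι → Fin m → A)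

def markedBlock (j : ι) (o : ℕ) : A :=
  if o < r then a else if h : r < o ∧ o < r + 1 + m then w j ⟨o - (r + 1), by omega⟩ else b

/-- Padding with `a` rather than `b` makes every position at offset `< r` in its block read `a`,
even past the last block. -/
def blockWord (ℓ : List ι) (p : ℕ) : A :=
  if h : p / (m + r + 1) < ℓ.length then
    markedBlock a b r w ℓ[p / (m + r + 1)] (p % (m + r + 1))
  else a

def markedPattern (j : ι) : List A :=
  List.ofFn fun t : Fin (m + r + 1) => markedBlock a b r w j t

variable {a b r w}

theorem markedBlock_of_lt {j : ι} {o : ℕ} (h : o < r) : markedBlock a b r w j o = a :=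
  if_pos h

theorem markedBlock_self (j : ι) : markedBlock a b r w j r = b := by
  simp [markedBlock]

theorem markedBlock_add (j : ι) (e : Fin m) : markedBlock a b r w j (r + 1 + e) = w j e := by
  rw [markedBlock, if_neg (by omega), dif_pos (by omega)]
  congr 2
  omega

theorem blockWord_mul_add {ℓ : List ι} {u o : ℕ} (hu : u < ℓ.length) (ho : o < m + r + 1) :
    blockWord a b r w ℓ (u * (m + r + 1) + o) = markedBlock a b r w ℓ[u] o := by
  have hdiv : (u * (m + r + 1) + o) / (m + r + 1) = u := by
    rw [mul_comm, Nat.mul_add_div (by omega), Nat.div_eq_of_lt ho, add_zero]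
  have hmod : (u * (m + r + 1) + o) % (m + r + 1) = o := by
    rw [mul_comm, Nat.mul_add_mod, Nat.mod_eq_of_lt ho]
  simp only [blockWord, hdiv, hmod, dif_pos hu]

theorem blockWord_of_length_mul_le {ℓ : List ι} {p : ℕ} (h : ℓ.length * (m + r + 1) ≤ p) :
    blockWord a b r w ℓ p = a :=
  dif_neg (not_lt.2 ((Nat.le_div_iff_mul_le (by omega)).2 h))

theorem blockWord_mul_add_of_lt (ℓ : List ι) (u : ℕ) {o : ℕ} (ho : o < r) :
    blockWord a b r w ℓ (u * (m + r + 1) + o) = a := by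
  by_cases hu : u < ℓ.length
  · rw [blockWord_mul_add hu (by omega), markedBlock_of_lt ho]
  · exact blockWord_of_length_mul_le (by nlinarith)

/-- The synchronisation argument: a block can only be read off `blockWord ℓ` at a block
boundary. -/
theorem mem_of_blockWord_eq_markedBlock (hab : a ≠ b) (hw : Function.Injective w)
    (hrun : ∀ j, AvoidsRun a r (w j)) {ℓ : List ι} {j : ι} {q : ℕ}
    (h : ∀ t < m + r + 1, blockWord a b r w ℓ (q + t) = markedBlock a b r w j t) : j ∈ ℓ := by
  set L := m + r + 1 with hL
  obtain ⟨u, o, hoL, rfl⟩ : ∃ u o, o < L ∧ q = u * L + o :=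
    ⟨q / L, q % L, Nat.mod_lt _ (by omega), by rw [mul_comm]; exact (Nat.div_add_mod q L).symm⟩
  have hb : blockWord a b r w ℓ (u * L + o + r) = b := by rw [h r (by omega), markedBlock_self]
  have hu : u < ℓ.length := by
    by_contra hu
    rw [blockWord_of_length_mul_le (by nlinarith)] at hb
    exact hab hb
  have ho : o = 0 := by
    by_contra ho
    rcases le_or_gt o r with hor | hro
    · -- the `a` at offset `r - o` of the pattern would sit on the `b` of block `u`
      have := h (r - o) (by omega)
      rw [markedBlock_of_lt (by omega), show u * L + o + (r - o) = u * L + r by omega,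
        blockWord_mul_add hu (by omega), markedBlock_self] at this
      exact hab this.symm
    rcases le_or_gt L (o + r) with hLor | hLor
    · -- the `b` of the pattern would sit among the leading `a`s of block `u + 1`
      rw [show u * L + o + r = (u + 1) * L + (o + r - L) by rw [add_mul]; omega,
        blockWord_mul_add_of_lt ℓ _ (by omega)] at hb
      exact hab hb
    · -- the leading `a`s of the pattern would form a run in `w ℓ[u]`
      obtain ⟨x, hxI, hx⟩ := hrun ℓ[u] (o - (r + 1)) (by omega)
      rw [mem_Ico] at hxI
      have := h (x + (r + 1) - o) (by omega)
      rw [markedBlock_of_lt (by omega), show u * L + o + (x + (r + 1) - o) = u * L + (r + 1 + x)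
        by omega, blockWord_mul_add hu (by omega), markedBlock_add] at this
      exact hx this
  subst ho
  have hcode : w ℓ[u] = w j := funext fun e => by
    have := h (r + 1 + e) (by omega)
    rwa [add_zero, blockWord_mul_add hu (by omega), markedBlock_add, markedBlock_add] at this
  exact hw hcode ▸ List.getElem_mem hu

theorem occursL_blockWord_iff (hab : a ≠ b) (hw : Function.Injective w)
    (hrun : ∀ j, AvoidsRun a r (w j)) {n : ℕ} {ℓ : List ι} (hn : ℓ.length * (m + r + 1) ≤ n)
    (j : ι) :
    occursL (markedPattern a b r w j) (fun p : Fin n => blockWord a b r w ℓ p) ↔ j ∈ ℓ := by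
  rw [markedPattern, occursL_ofFn_iff]
  refine ⟨fun ⟨q, _, hq⟩ => mem_of_blockWord_eq_markedBlock hab hw hrun fun t ht => hq ⟨t, ht⟩,
    fun hj => ?_⟩
  obtain ⟨u, hu, rfl⟩ := List.getElem_of_mem hj
  exact ⟨u * (m + r + 1), by nlinarith, fun t => blockWord_mul_add hu t.2⟩

end Blocks

theorem exists_patternShattered_of_code {A : Type} {a b : A} (hab : a ≠ b) {d m r n k : ℕ}
    (w : (Fin d → Bool) → Fin m → A) (hw : Function.Injective w)
    (hrun : ∀ v, AvoidsRun a r (w v)) (hk : m + r + 1 ≤ k)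
    (hn : 2 ^ (d - 1) * (m + r + 1) ≤ n) :
    ∃ X : Finset (Fin n → A), X.card = d ∧ PatternShattered k X := by
  classical
  let ℓ : Fin d → List (Fin d → Bool) := fun i =>
    ({v | ∀ y ∈ ({i} : Finset (Fin d)), v y = true} : Finset _).toList
  let x : Fin d → Fin n → A := fun i p => blockWord a b r w (ℓ i) p
  have hocc : ∀ i v, occursL (markedPattern a b r w v) (x i) ↔ v i = true := by
    intro i v
    have hlen : (ℓ i).length = 2 ^ (d - 1) := by
      rw [length_toList, card_filter_forall_mem_eq, Fintype.card_bool, Fintype.card_fin,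
        card_singleton]
    rw [occursL_blockWord_iff hab hw hrun (by rwa [hlen])]
    simp [ℓ]
  have hx : Function.Injective x := by
    intro i i' hii'
    have := (hocc i' fun y => decide (y = i)).1 (hii' ▸ (hocc i _).2 (by simp))
    simpa [eq_comm] using this
  refine ⟨univ.image x, by rw [card_image_of_injective _ hx, card_fin], fun f =>
    ⟨markedPattern a b r w fun i => f (x i), by simpa [markedPattern] using hk, ?_⟩⟩
  simp only [mem_image, mem_univ, true_and, forall_exists_index, forall_apply_eq_imp_iff]
  exact fun i => hocc i _

theorem exists_patternShattered {A : Type} [Fintype A] (hc : 2 ≤ Fintype.card A) {a b : A}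
    (hab : a ≠ b) {d m n k : ℕ} (hd : 2 ^ d ≤ Fintype.card A ^ (m - 1))
    (hk : m + Nat.log 2 m + 3 ≤ k) (hn : 2 ^ (d - 1) * (m + Nat.log 2 m + 3) ≤ n) :
    ∃ X : Finset (Fin n → A), X.card = d ∧ PatternShattered k X := by
  classical
  have hcard : Fintype.card (Fin d → Bool) ≤
      Fintype.card {w : Fin m → A // AvoidsRun a (Nat.log 2 m + 2) w} := by
    rw [Fintype.card_fun, Fintype.card_bool, Fintype.card_fin, Fintype.card_subtype]
    exact hd.trans (pow_pred_le_card_avoidsRun a hc (by omega)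
      (Nat.lt_pow_succ_log_self one_lt_two m).le)
  obtain ⟨e⟩ := Function.Embedding.nonempty_of_card_le hcard
  exact exists_patternShattered_of_code hab (fun v => (e v).1)
    (fun v v' h => e.injective (Subtype.ext h)) (fun v => (e v).2) (by omega) (by omega)

theorem exists_patternShattered_of_le_one {A : Type} {a b : A} (hab : a ≠ b) {d n k : ℕ}
    (hk : 1 ≤ k) (hd : d ≤ 1) :
    ∃ X : Finset (Fin n → A), X.card = d ∧ PatternShattered k X := by
  interval_cases d
  · exact ⟨∅, rfl, fun _ => ⟨[], by simp, by simp⟩⟩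
  · refine ⟨{fun _ => a}, rfl, fun f => ⟨if f (fun _ => a) then [] else [b], ?_, ?_⟩⟩
    · split_ifs <;> simp only [List.length_nil, List.length_singleton] <;> omega
    · simp only [mem_singleton, forall_eq]
      split_ifs with hf
      · simpa [hf] using ⟨0, by simp, fun t => t.elim0⟩
      · simp only [Bool.not_eq_true] at hf
        simp only [hf, Bool.false_eq_true, iff_false]
        rintro ⟨i, _, hi⟩
        exact hab (hi ⟨0, by simp⟩)

section Estimates

open Real

theorem four_le_of_two_le_sub_logb {t : ℝ} (ht : 1 ≤ t) (h : 2 ≤ t - logb 2 t) : 4 ≤ t := by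
  have ht2 : 2 ≤ t := by linarith [logb_nonneg one_lt_two ht]
  by_contra! ht4
  -- Bernoulli: `2 ^ (t - 2) = 4 ^ ((t - 2) / 2) ≤ 1 + 3 (t - 2) / 2 < t`, whereas `t ≤ 2 ^ (t - 2)`
  have hbern : (2 : ℝ) ^ (t - 2) ≤ 1 + (t - 2) / 2 * 3 := by
    have h4 : (2 : ℝ) ^ (t - 2) = (1 + 3) ^ ((t - 2) / 2) := by
      rw [show (1 : ℝ) + 3 = 2 ^ (2 : ℝ) by norm_num, ← rpow_mul zero_le_two]
      ring_nf
    rw [h4]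
    exact rpow_one_add_le_one_add_mul_self (by norm_num) (by linarith) (by linarith)
  have hpow : t ≤ (2 : ℝ) ^ (t - 2) :=
    (logb_le_iff_le_rpow one_lt_two (by linarith)).1 (by linarith)
  linarith

theorem two_pow_le_pow_pred_of_le {c d m : ℕ} (hc : 1 ≤ c)
    (h : (d : ℝ) ≤ ((m : ℝ) - 1) * logb 2 c) : 2 ^ d ≤ c ^ (m - 1) := by
  have hcast : (m : ℝ) - 1 ≤ ((m - 1 : ℕ) : ℝ) := by rcases m with _ | m <;> simp
  have hd : (d : ℝ) ≤ logb 2 ((c : ℝ) ^ (m - 1)) := by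
    rw [logb_pow]
    exact h.trans (mul_le_mul_of_nonneg_right hcast (logb_nonneg one_lt_two (by exact_mod_cast hc)))
  rw [le_logb_iff_rpow_le one_lt_two (by positivity), rpow_natCast] at hd
  exact_mod_cast hd

theorem add_log_add_three_le {m k : ℕ} (h : (m : ℝ) ≤ k - logb 2 k - 3) :
    m + Nat.log 2 m + 3 ≤ k := by
  have hlogk : 0 ≤ logb 2 k := by
    rcases Nat.eq_zero_or_pos k with rfl | hk
    · simp
    · exact logb_nonneg one_lt_two (by exact_mod_cast hk)
  have hmk : m ≤ k := by exact_mod_cast (by linarith : (m : ℝ) ≤ k)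
  have hlog : (Nat.log 2 m : ℝ) ≤ logb 2 k := by
    calc (Nat.log 2 m : ℝ) ≤ Nat.log 2 k := by exact_mod_cast Nat.log_mono_right hmk
      _ ≤ logb 2 k := by exact_mod_cast natLog_le_logb k 2
  have : ((m + Nat.log 2 m + 3 : ℕ) : ℝ) ≤ k := by push_cast; linarith
  exact_mod_cast this

theorem two_pow_pred_mul_le {c n m D : ℕ} (hc : 2 ≤ c) (hn : 2 ≤ n) (hD : 2 ≤ D)
    (hDm : (D : ℝ) ≤ ((m : ℝ) - 1) * logb 2 c)
    (hmn : (m : ℝ) ≤ logb 2 n / logb 2 c - logb 2 (logb 2 n) / logb 2 c + 1) :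
    2 ^ (D - 1) * (m + Nat.log 2 m + 3) ≤ n := by
  -- with `t = log₂ n`: `D ≤ t - log₂ t` gives `2^(D-1) ≤ n / (2t)`, and a block has length
  -- at most `t + 4 ≤ 2t`
  set t := logb 2 n
  set lc := logb 2 c
  have one_le_logb : ∀ {x : ℕ}, 2 ≤ x → 1 ≤ logb 2 x := fun hx =>
    (le_logb_iff_rpow_le one_lt_two (by positivity)).2 (by simpa using (by exact_mod_cast hx))
  have hlc : 1 ≤ lc := one_le_logb hc
  have hkey : ((m : ℝ) - 1) * lc ≤ t - logb 2 t := by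
    have : (m : ℝ) - 1 ≤ (t - logb 2 t) / lc := by rw [sub_div]; linarith
    exact (le_div_iff₀ (by linarith)).1 this
  have hDR : (2 : ℝ) ≤ D := by exact_mod_cast hD
  have ht4 : 4 ≤ t := four_le_of_two_le_sub_logb (one_le_logb hn) (by linarith)
  have hlogt : 2 ≤ logb 2 t :=
    (le_logb_iff_rpow_le one_lt_two (by linarith)).2 (by norm_num; linarith)
  have hm1 : 1 ≤ (m : ℝ) := by nlinarith
  have hmlc : (m : ℝ) - 1 ≤ ((m : ℝ) - 1) * lc := le_mul_of_one_le_right (by linarith) hlc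
  have hlogm : (Nat.log 2 m : ℝ) ≤ logb 2 t := by
    calc (Nat.log 2 m : ℝ) ≤ logb 2 m := by exact_mod_cast natLog_le_logb m 2
      _ ≤ logb 2 t := logb_le_logb_of_le one_lt_two (by linarith) (by linarith)
  have hlen : (m : ℝ) + Nat.log 2 m + 3 ≤ 2 * t := by linarith
  have hpow : (2 : ℝ) ^ (D - 1) ≤ n / (2 * t) := by
    rw [← rpow_natCast, ← le_logb_iff_rpow_le one_lt_two (by positivity),
      logb_div (by positivity) (by positivity), logb_mul (by norm_num) (by positivity),
      logb_self_eq_one one_lt_two, Nat.cast_sub (by omega)]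
    push_cast
    linarith
  have hR : (2 : ℝ) ^ (D - 1) * (m + Nat.log 2 m + 3) ≤ n :=
    calc (2 : ℝ) ^ (D - 1) * (m + Nat.log 2 m + 3) ≤ n / (2 * t) * (2 * t) :=
          mul_le_mul hpow hlen (by positivity) (by positivity)
      _ = n := div_mul_cancel₀ _ (by positivity)
  exact_mod_cast hR

end Estimates

theorem vc_lower_bound_general (A : Type) [Fintype A] (h2 : 2 ≤ Fintype.card A)
    (n k : ℕ) (hk : 1 ≤ k) (hn : 2 ≤ n) :
    ∃ X : Finset (Fin n → A),
      X.card =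
        ⌊(((⌊min ((k : ℝ) - Real.logb 2 k - 3)
              (Real.logb 2 n / Real.logb 2 (Fintype.card A) -
                Real.logb 2 (Real.logb 2 n) / Real.logb 2 (Fintype.card A) + 1)⌋ : ℤ) : ℝ)
            - 1) * Real.logb 2 (Fintype.card A)⌋₊ ∧
      (∀ f : (Fin n → A) → Bool, ∃ p : List A, p.length ≤ k ∧
        ∀ s ∈ X, (occursL p s ↔ f s = true)) := by
  obtain ⟨a, b, hab⟩ := Fintype.exists_pair_of_one_lt_card h2
  set μ := min ((k : ℝ) - Real.logb 2 k - 3) (Real.logb 2 n / Real.logb 2 (Fintype.card A) -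
    Real.logb 2 (Real.logb 2 n) / Real.logb 2 (Fintype.card A) + 1)
  set D := ⌊((⌊μ⌋ : ℝ) - 1) * Real.logb 2 (Fintype.card A)⌋₊
  rcases le_or_gt D 1 with hD1 | hD1
  · exact exists_patternShattered_of_le_one hab hk hD1
  have hDR : (1 : ℝ) < D := by exact_mod_cast hD1
  have hDm : (D : ℝ) ≤ ((⌊μ⌋ : ℝ) - 1) * Real.logb 2 (Fintype.card A) :=
    Nat.floor_le (by linarith [(Nat.one_le_floor_iff _).1 (by omega : 1 ≤ D)])
  have hlc : 0 < Real.logb 2 (Fintype.card A) := Real.logb_pos one_lt_two (by exact_mod_cast h2)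
  have hμ1 : (0 : ℝ) < ⌊μ⌋ - 1 := pos_of_mul_pos_left (by linarith) hlc.le
  have hμ0 : (0 : ℤ) ≤ ⌊μ⌋ := by exact_mod_cast (by linarith : (0 : ℝ) ≤ ⌊μ⌋)
  obtain ⟨m, hm⟩ := Int.eq_ofNat_of_zero_le hμ0
  have hmμ : (m : ℝ) ≤ μ := by exact_mod_cast hm ▸ Int.floor_le μ
  rw [hm, Int.cast_natCast] at hDm
  exact exists_patternShattered h2 hab (two_pow_le_pow_pred_of_le (by omega) hDm)
    (add_log_add_three_le (hmμ.trans (min_le_left _ _)))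
    (two_pow_pred_mul_le h2 hn hD1 hDm (hmμ.trans (min_le_right _ _)))

/-- VC lower bound for pattern learning: with
`m = ⌊min(k - log₂ k - 3, log₂ n/log₂|Σ| - log₂ log₂ n/log₂|Σ| + 1)⌋` and
`d = ⌊(m-1)·log₂|Σ|⌋`, there is a set of `d` strings in `Σ^n` shattered by the
class of substring indicators of patterns of length at most `k`. -/
theorem vc_lower_bound (A : Type) [Fintype A] (h2 : 2 ≤ Fintype.card A)
    (n k : ℕ) (hk : 1 ≤ k) (hn : 2 ≤ n)
    (hyp : ((k : ℝ) - Real.logb 2 k - 5) * Real.logb 2 (Fintype.card A) ≤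
      Real.logb 2 n - Real.logb 2 (Real.logb 2 n)) :
    ∃ X : Finset (Fin n → A),
      X.card =
        ⌊(((⌊min ((k : ℝ) - Real.logb 2 k - 3)
              (Real.logb 2 n / Real.logb 2 (Fintype.card A) -
                Real.logb 2 (Real.logb 2 n) / Real.logb 2 (Fintype.card A) + 1)⌋ : ℤ) : ℝ)
            - 1) * Real.logb 2 (Fintype.card A)⌋₊ ∧
      (∀ f : (Fin n → A) → Bool, ∃ p : List A, p.length ≤ k ∧
        ∀ s ∈ X, (occursL p s ↔ f s = true)) :=
  vc_lower_bound_general A h2 n k hk hn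
end

section
/- For an infinite alphabet Σ, the class H_{k,Σ} (pattern length at most k ≥ 1) on strings of length n has VC dimension at least ⌊log₂ n⌋ + 1: there exist d = ⌊log₂ n⌋ + 1 strings in Σ^n shattered using single-character patterns. -/
/-!
Give each of the `d = ⌊log₂ n⌋ + 1` strings its own coordinate `i`, and reserve a fresh symbol
`c_g` for every labeling `g : Fin d → Bool`. String `i` spells out exactly the symbols `c_g` with
`g i = true` (there are `2 ^ (d - 1) ≤ n` of them), padded with one further blank symbol. Then the
one-letter pattern `c_g` occurs in string `i` iff `g i = true`, so it realizes the labeling `g`.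
-/

open Finset

theorem occursL_singleton {A : Type} {n : ℕ} (c : A) (s : Fin n → A) :
    occursL [c] s ↔ c ∈ Set.range s := by
  constructor
  · rintro ⟨i, hi, h⟩
    exact ⟨⟨i, by simpa using hi⟩, h ⟨0, Nat.one_pos⟩⟩
  · rintro ⟨⟨i, hi⟩, rfl⟩
    refine ⟨i, by simpa using hi, fun ⟨t, ht⟩ => ?_⟩
    obtain rfl : t = 0 := by simpa using ht
    rfl

theorem List.exists_fin_getElem?_eq_some_iff {α : Type*} {l : List α} {n : ℕ}
    (hl : l.length ≤ n) {a : α} : (∃ i : Fin n, l[(i : ℕ)]? = some a) ↔ a ∈ l := by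
  rw [List.mem_iff_getElem?]
  refine ⟨fun ⟨i, hi⟩ => ⟨i, hi⟩, fun ⟨i, hi⟩ => ⟨⟨i, ?_⟩, hi⟩⟩
  exact lt_of_lt_of_le (List.getElem?_eq_some_iff.mp hi).1 hl

theorem card_filter_apply_eq_true {ι : Type*} [Fintype ι] [DecidableEq ι] (i : ι) :
    #{g : ι → Bool | g i = true} = 2 ^ (Fintype.card ι - 1) := by
  have h := Fintype.card_filter_piFinset_const (univ : Finset Bool) i true
  rwa [Fintype.piFinset_univ, if_pos (mem_univ _), card_univ, Fintype.card_bool] at h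

theorem injective_of_forall_exists_iff {ι β γ : Type*} [DecidableEq ι] {x : ι → β}
    (P : β → γ → Prop) (h : ∀ f : ι → Bool, ∃ c, ∀ i, P (x i) c ↔ f i = true) :
    Function.Injective x := by
  intro i j hij
  obtain ⟨c, hc⟩ := h fun k => decide (k = i)
  have hi : P (x i) c := (hc i).2 (decide_eq_true rfl)
  simpa [eq_comm] using (hc j).1 (hij ▸ hi)

theorem exists_strings_shattered_by_symbols (A ι : Type) [Infinite A] [Fintype ι] {n : ℕ}
    (hn : 2 ^ (Fintype.card ι - 1) ≤ n) :
    ∃ x : ι → Fin n → A, ∀ f : ι → Bool, ∃ c : A, ∀ i, c ∈ Set.range (x i) ↔ f i = true := by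
  classical
  obtain ⟨e⟩ : Nonempty (Option (ι → Bool) ↪ A) :=
    ⟨(Fintype.equivFin _).toEmbedding.trans (Fin.valEmbedding.trans (Infinite.natEmbedding A))⟩
  -- Past the end of the list `S i`, `getElem?` returns `none`: that is the padding symbol.
  let S : ι → List (ι → Bool) := fun i => (univ.filter fun g : ι → Bool => g i = true).toList
  refine ⟨fun i pos => e (S i)[(pos : ℕ)]?, fun f => ⟨e (some f), fun i => ?_⟩⟩
  have hlen : (S i).length ≤ n := by
    simpa only [S, length_toList, card_filter_apply_eq_true] using hn
  simp only [Set.mem_range, e.apply_eq_iff_eq, List.exists_fin_getElem?_eq_some_iff hlen, S,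
    mem_toList, mem_filter, mem_univ, true_and]

/-- For an infinite alphabet, the substring-indicator class with pattern length
at most `k ≥ 1` on strings of length `n` has VC dimension at least
`⌊log₂ n⌋ + 1`: there exist `⌊log₂ n⌋ + 1` strings shattered by it. -/
theorem vc_lower_infinite_alphabet (A : Type) [Infinite A]
    (n k : ℕ) (hn : 1 ≤ n) (hk : 1 ≤ k) :
    ∃ X : Finset (Fin n → A),
      X.card = Nat.log 2 n + 1 ∧
      (∀ f : (Fin n → A) → Bool, ∃ p : List A, p.length ≤ k ∧
        ∀ s ∈ X, (occursL p s ↔ f s = true)) := by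
  classical
  obtain ⟨x, hx⟩ := exists_strings_shattered_by_symbols A (Fin (Nat.log 2 n + 1)) (n := n)
    (by simpa using Nat.pow_log_le_self 2 (Nat.one_le_iff_ne_zero.mp hn))
  have hinj : Function.Injective x :=
    injective_of_forall_exists_iff (fun s c => c ∈ Set.range s) hx
  refine ⟨univ.image x, by rw [card_image_of_injective _ hinj, card_univ, Fintype.card_fin],
    fun f => ?_⟩
  obtain ⟨c, hc⟩ := hx (f ∘ x)
  refine ⟨[c], hk, ?_⟩
  simp only [mem_image, mem_univ, true_and, forall_exists_index, forall_apply_eq_imp_iff,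
    occursL_singleton]
  exact hc
end

section
/- Disjointness reduces to string matching: for all m, k ≥ 2 and vectors a, b ∈ {0,1}^m, setting x = a₁b₁1^{k-2}0 a₂b₂1^{k-2}0 ... a_m b_m 1^{k-2}0 (a string of length m(k+1)) and y = 1^k, one has DISJ_m(a,b) := ⋁_{i∈[m]}(a_i ∧ b_i) = SM_{m(k+1),k}(x, y). -/
/-!
Position `p` of `x` lies in block `p / (k + 1)` at offset `p % (k + 1)`. The last offset `k`
always carries a `0`, so a run of `k` ones can neither cross a block boundary nor start
inside a block: it must be exactly offsets `0, …, k - 1` of one block, i.e. `a_i b_i 1^(k-2)`,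
which is all ones iff `a_i = b_i = 1`.
-/

namespace DisjReduction

def blockEncoding (m k : ℕ) (a b : Fin m → Bool) : Fin (m * (k + 1)) → Bool :=
  fun p =>
    if p.val % (k + 1) = 0 then a ⟨p.val / (k + 1), Nat.div_lt_of_lt_mul (Nat.mul_comm m (k+1) ▸ p.isLt)⟩
    else if p.val % (k + 1) = 1 then b ⟨p.val / (k + 1), Nat.div_lt_of_lt_mul (Nat.mul_comm m (k+1) ▸ p.isLt)⟩
    else if p.val % (k + 1) = k then false
    else true

theorem mul_add_div_of_lt {q n t : ℕ} (ht : t < n) : (q * n + t) / n = q := by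
  rw [Nat.mul_comm, Nat.mul_add_div (by omega), Nat.div_eq_of_lt ht, Nat.add_zero]

theorem exists_add_mod_eq_of_mod_ne_zero {j k : ℕ} (hj : j % (k + 1) ≠ 0) :
    ∃ t < k, (j + t) % (k + 1) = k := by
  have hlt := Nat.mod_lt j (by omega : 0 < k + 1)
  refine ⟨k - j % (k + 1), by omega, ?_⟩
  have hsplit : j + (k - j % (k + 1)) = (j / (k + 1)) * (k + 1) + k := by
    have := Nat.div_add_mod j (k + 1)
    rw [Nat.mul_comm] at this
    omega
  rw [hsplit, Nat.mul_add_mod_of_lt (Nat.lt_succ_self k)]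

variable {m k : ℕ} {a b : Fin m → Bool}

theorem blockEncoding_mul_add {q t : ℕ} (hq : q < m) (ht : t < k + 1)
    (hp : q * (k + 1) + t < m * (k + 1)) :
    blockEncoding m k a b ⟨q * (k + 1) + t, hp⟩ =
      if t = 0 then a ⟨q, hq⟩ else if t = 1 then b ⟨q, hq⟩ else if t = k then false else true := by
  simp only [blockEncoding, Nat.mul_add_mod_of_lt ht, mul_add_div_of_lt ht]

theorem blockEncoding_eq_false (hk : 2 ≤ k) (p : Fin (m * (k + 1)))
    (hp : p.val % (k + 1) = k) : blockEncoding m k a b p = false := by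
  simp only [blockEncoding]
  rw [if_neg (by omega), if_neg (by omega), if_pos hp]

theorem occursIn_ones_of_and (i : Fin m) (ha : a i = true) (hb : b i = true) :
    occursIn (blockEncoding m k a b) (fun _ : Fin k => true) := by
  have hfit : i.val * (k + 1) + k ≤ m * (k + 1) := by
    have := Nat.mul_le_mul_right (k + 1) (Nat.succ_le_of_lt i.isLt)
    rw [Nat.succ_mul] at this
    omega
  refine ⟨i.val * (k + 1), hfit, fun t => ?_⟩
  rw [blockEncoding_mul_add i.isLt (by omega)]
  have := t.isLt
  split_ifs <;> simp_all

theorem exists_and_of_occursIn_ones (hk : 2 ≤ k)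
    (h : occursIn (blockEncoding m k a b) (fun _ : Fin k => true)) :
    ∃ i, a i = true ∧ b i = true := by
  obtain ⟨j, hfit, hrun⟩ := h
  have hj : j % (k + 1) = 0 := by
    by_contra hj
    obtain ⟨t, htk, hlast⟩ := exists_add_mod_eq_of_mod_ne_zero hj
    have := hrun ⟨t, htk⟩
    rw [blockEncoding_eq_false hk _ hlast] at this
    exact Bool.false_ne_true this
  obtain ⟨q, rfl⟩ : ∃ q, j = q * (k + 1) :=
    ⟨j / (k + 1), by have := Nat.div_add_mod j (k + 1); rw [Nat.mul_comm] at this; omega⟩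
  have hq : q < m := Nat.lt_of_mul_lt_mul_right (by omega : q * (k + 1) < m * (k + 1))
  refine ⟨⟨q, hq⟩, ?_, ?_⟩
  · have h0 := hrun ⟨0, by omega⟩
    rwa [blockEncoding_mul_add hq (by omega), if_pos rfl] at h0
  · have h1 := hrun ⟨1, by omega⟩
    rwa [blockEncoding_mul_add hq (by omega), if_neg one_ne_zero, if_pos rfl] at h1

end DisjReduction

theorem disj_reduces_to_SM_general (m k : ℕ) (hk : 2 ≤ k)
    (a b : Fin m → Bool) :
    ((∃ i, a i = true ∧ b i = true) ↔
      occursIn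
        (fun p : Fin (m * (k + 1)) =>
          if p.val % (k + 1) = 0 then a ⟨p.val / (k + 1), Nat.div_lt_of_lt_mul (Nat.mul_comm m (k+1) ▸ p.isLt)⟩
          else if p.val % (k + 1) = 1 then b ⟨p.val / (k + 1), Nat.div_lt_of_lt_mul (Nat.mul_comm m (k+1) ▸ p.isLt)⟩
          else if p.val % (k + 1) = k then false
          else true)
        (fun _ : Fin k => true)) :=
  ⟨fun ⟨i, ha, hb⟩ => DisjReduction.occursIn_ones_of_and i ha hb,
    DisjReduction.exists_and_of_occursIn_ones hk⟩

/-- Disjointness reduces to string matching: with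
`x = a₁b₁1^(k-2)0 a₂b₂1^(k-2)0 ⋯ a_m b_m 1^(k-2)0` and `y = 1^k`,
`DISJ_m(a,b) = SM_{m(k+1),k}(x,y)`. -/
theorem disj_reduces_to_SM (m k : ℕ) (hm : 1 ≤ m) (hk : 2 ≤ k)
    (a b : Fin m → Bool) :
    ((∃ i, a i = true ∧ b i = true) ↔
      occursIn
        (fun p : Fin (m * (k + 1)) =>
          if p.val % (k + 1) = 0 then a ⟨p.val / (k + 1), Nat.div_lt_of_lt_mul (Nat.mul_comm m (k+1) ▸ p.isLt)⟩
          else if p.val % (k + 1) = 1 then b ⟨p.val / (k + 1), Nat.div_lt_of_lt_mul (Nat.mul_comm m (k+1) ▸ p.isLt)⟩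
          else if p.val % (k + 1) = k then false
          else true)
        (fun _ : Fin k => true)) :=
  disj_reduces_to_SM_general m k hk a b
end
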